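/- arXiv:2208.14066 — 7 statements merged into one kernel-verified Lean document; each statement's English description precedes it below -/
import Mathlib

section
/- Let a, b, c be positive integers such that c ≤ a ≤ b. Then, as real numbers, C(a,c)/C(b,c) ≤ ((a − (c−1)/2)/(b − (c−1)/2))^c, where C(·,·) denotes the binomial coefficient. -/
theorem stmt_2 (a b c : ℕ) (ha : 0 < a) (hb : 0 < b) (hc : 0 < c)
    (hca : c ≤ a) (hab : a ≤ b) :
    ((Nat.choose a c : ℝ) / (Nat.choose b c : ℝ))
      ≤ (((a : ℝ) - ((c : ℝ) - 1) / 2) / ((b : ℝ) - ((c : ℝ) - 1) / 2)) ^ c := by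
  set A : ℝ := (a : ℝ) - ((c : ℝ) - 1) / 2 with hAdef
  set B : ℝ := (b : ℝ) - ((c : ℝ) - 1) / 2 with hBdef
  have hc1 : (1 : ℝ) ≤ (c : ℝ) := by exact_mod_cast hc
  have hca' : (c : ℝ) ≤ (a : ℝ) := by exact_mod_cast hca
  have hab' : (a : ℝ) ≤ (b : ℝ) := by exact_mod_cast hab
  have hA : 0 < A := by rw [hAdef]; linarith
  have hAB : A ≤ B := by rw [hAdef, hBdef]; linarith
  have hB : 0 < B := lt_of_lt_of_le hA hAB
  -- the factor function
  set r : ℕ → ℝ := fun i => ((a : ℝ) - i) / ((b : ℝ) - i) with hr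
  -- positivity of factors
  have hfac : ∀ i ∈ Finset.range c, 0 < (a : ℝ) - i ∧ 0 < (b : ℝ) - i := by
    intro i hi
    have hi' : (i : ℝ) < (c : ℝ) := by exact_mod_cast Finset.mem_range.mp hi
    constructor <;> linarith
  -- Step 1: rewrite LHS as a product
  have hstep1 : ((Nat.choose a c : ℝ) / (Nat.choose b c : ℝ)) = ∏ i ∈ Finset.range c, r i := by
    have hdesc : ∀ n : ℕ, c ≤ n → (n.descFactorial c : ℝ) = ∏ i ∈ Finset.range c, ((n : ℝ) - i) := by
      intro n hn
      rw [Nat.descFactorial_eq_prod_range]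
      push_cast
      refine Finset.prod_congr rfl ?_
      intro i hi
      have : i ≤ n := le_of_lt (lt_of_lt_of_le (Finset.mem_range.mp hi) hn)
      rw [Nat.cast_sub this]
    have ha' : (c.factorial : ℝ) * (a.choose c : ℝ) = ∏ i ∈ Finset.range c, ((a : ℝ) - i) := by
      rw [← hdesc a hca, Nat.descFactorial_eq_factorial_mul_choose]; push_cast; ring
    have hb' : (c.factorial : ℝ) * (b.choose c : ℝ) = ∏ i ∈ Finset.range c, ((b : ℝ) - i) := by
      rw [← hdesc b (le_trans hca hab), Nat.descFactorial_eq_factorial_mul_choose]; push_cast; ring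
    have hfact : (0 : ℝ) < (c.factorial : ℝ) := by exact_mod_cast c.factorial_pos
    simp only [hr]
    rw [Finset.prod_div_distrib, ← ha', ← hb']
    rw [mul_div_mul_left _ _ (ne_of_gt hfact)]
  rw [hstep1]
  -- Step 2: the product inequality
  have hP0 : 0 ≤ ∏ i ∈ Finset.range c, r i :=
    Finset.prod_nonneg fun i hi => div_nonneg (le_of_lt (hfac i hi).1) (le_of_lt (hfac i hi).2)
  have hR0 : 0 ≤ A / B := div_nonneg hA.le hB.le
  have hsq : (∏ i ∈ Finset.range c, r i) ^ 2 ≤ ((A / B) ^ c) ^ 2 := by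
    have hrefl : ∏ i ∈ Finset.range c, r (c - 1 - i) = ∏ i ∈ Finset.range c, r i :=
      Finset.prod_range_reflect r c
    calc (∏ i ∈ Finset.range c, r i) ^ 2
        = ∏ i ∈ Finset.range c, (r i * r (c - 1 - i)) := by
          rw [Finset.prod_mul_distrib, hrefl]; ring
      _ ≤ ∏ i ∈ Finset.range c, (A / B) ^ 2 := by
          refine Finset.prod_le_prod ?_ ?_
          · intro i hi
            have h1 := (hfac i hi).1
            have h2 := (hfac i hi).2
            have hj : c - 1 - i ∈ Finset.range c := by
              refine Finset.mem_range.mpr ?_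
              omega
            have h3 := (hfac _ hj).1
            have h4 := (hfac _ hj).2
            exact mul_nonneg (div_nonneg h1.le h2.le) (div_nonneg h3.le h4.le)
          · intro i hi
            have hic : i < c := Finset.mem_range.mp hi
            have hj : c - 1 - i ∈ Finset.range c := Finset.mem_range.mpr (by omega)
            have hjcast : ((c - 1 - i : ℕ) : ℝ) = (c : ℝ) - 1 - i := by
              rw [Nat.cast_sub (by omega : i ≤ c - 1), Nat.cast_sub (by omega : 1 ≤ c),
                Nat.cast_one]
            have h1 := (hfac i hi).1
            have h2 := (hfac i hi).2
            have h3 := (hfac _ hj).1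
            have h4 := (hfac _ hj).2
            rw [hjcast] at h3 h4
            set d : ℝ := ((c : ℝ) - 1) / 2 - i with hd
            have hai : (a : ℝ) - i = A + d := by rw [hAdef, hd]; ring
            have haj : (a : ℝ) - ((c : ℝ) - 1 - i) = A - d := by rw [hAdef, hd]; ring
            have hbi : (b : ℝ) - i = B + d := by rw [hBdef, hd]; ring
            have hbj : (b : ℝ) - ((c : ℝ) - 1 - i) = B - d := by rw [hBdef, hd]; ring
            have key : (A + d) * (A - d) / ((B + d) * (B - d)) ≤ (A / B) ^ 2 := by
              rw [div_pow]
              have hnum : 0 < (A + d) * (A - d) := by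
                rw [← hai, ← haj]; exact mul_pos h1 h3
              have hden : 0 < (B + d) * (B - d) := by
                rw [← hbi, ← hbj]; exact mul_pos h2 h4
              rw [div_le_div_iff₀ hden (by positivity)]
              nlinarith [mul_nonneg (sq_nonneg d) (sub_nonneg.mpr (pow_le_pow_left₀ hA.le hAB 2))]
            calc r i * r (c - 1 - i)
                = ((a : ℝ) - i) * ((a : ℝ) - ((c : ℝ) - 1 - i)) /
                  (((b : ℝ) - i) * ((b : ℝ) - ((c : ℝ) - 1 - i))) := by
                  simp only [hr, hjcast, div_mul_div_comm]
              _ = (A + d) * (A - d) / ((B + d) * (B - d)) := by rw [hai, haj, hbi, hbj]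
              _ ≤ (A / B) ^ 2 := key
      _ = ((A / B) ^ c) ^ 2 := by rw [Finset.prod_const, Finset.card_range, ← pow_mul, ← pow_mul, Nat.mul_comm]
  exact (pow_le_pow_iff_left₀ hP0 (pow_nonneg hR0 c) two_ne_zero).mp hsq
end

section
/- Let k, n, d, w, t be positive integers with 2 ≤ k ≤ n and w(k−1) ≤ t − (w−1)d. If n · C(n−1, k−1) · ((w(k−1) − (w−1)/2)/(t − (w−1)d − (w−1)/2))^w < 1, then there exists a (k,n,d,w)-superimposed code of length t. -/
/-- Any two 1's in the binary vector `v` are separated by a run of at least `d` 0's: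
if coordinates `i < j` both equal 1 then `j - i ≥ d + 1`. -/
def RunConstrained {t : ℕ} (d : ℕ) (v : Fin t → Bool) : Prop :=
  ∀ i j : Fin t, i < j → v i = true → v j = true → (i : ℕ) + d + 1 ≤ (j : ℕ)

/-- `M` (a `t × n` binary matrix) is a `(k,n,d)`-superimposed code: every column satisfies
the runlength constraint `d`, and for every set of `k` columns and every column `c` of the
set there is a row where `c` has a 1 and all other columns of the set have a 0. -/
def IsSuperimposedCode (k n d t : ℕ) (M : Fin t → Fin n → Bool) : Prop :=
  (∀ j : Fin n, RunConstrained d (fun i => M i j)) ∧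
  ∀ S : Finset (Fin n), S.card = k → ∀ j ∈ S,
    ∃ i : Fin t, M i j = true ∧ ∀ j' ∈ S, j' ≠ j → M i j' = false

/-- Every column of `M` has Hamming weight exactly `w`. -/
def ColWeight (w : ℕ) {t n : ℕ} (M : Fin t → Fin n → Bool) : Prop :=
  ∀ j : Fin n, (Finset.univ.filter (fun i => M i j = true)).card = w

/-
Put `T = t - (w - 1) d`. Shifting the `r`-th smallest element of a `w`-subset of `{0, …, T - 1}`
up by `r d` is injective and produces a run-constrained column of weight `w`, so there are at least
`C(T, w)` admissible columns. Choose the `n` columns independently among them: a fixed column lies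
inside the union of `k - 1` fixed other columns for at most `C(w (k - 1), w)` of its values. A union
bound over the `n C(n - 1, k - 1)` choices of a column and `k - 1` others leaves a good matrix as
soon as `n C(n - 1, k - 1) C(w (k - 1), w) < C(T, w)`, and this follows from the hypothesis because
`C(s, w) ≤ C(T, w) ((s - (w - 1)/2) / (T - (w - 1)/2))^w`, obtained by pairing the factors `s - i`
and `s - (w - 1 - i)` of the falling factorial.
-/

open Finset Fintype Function

lemma prod_range_sq_eq_prod_mul_reflect {M : Type*} [CommMonoid M] (f : ℕ → M) (n : ℕ) :
    (∏ i ∈ range n, f i) ^ 2 = ∏ i ∈ range n, f i * f (n - 1 - i) := by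
  rw [prod_mul_distrib, prod_range_reflect, sq]

lemma prod_range_sub_mul_pow_le (w : ℕ) {x y : ℝ} (hx : (w : ℝ) - 1 ≤ x) (hxy : x ≤ y) :
    (∏ i ∈ range w, (x - i)) * (y - (w - 1) / 2) ^ w ≤
      (x - (w - 1) / 2) ^ w * ∏ i ∈ range w, (y - i) := by
  rcases w.eq_zero_or_pos with rfl | hw
  · simp
  set m : ℝ := ((w : ℝ) - 1) / 2 with hm
  have hw1 : (1 : ℝ) ≤ w := by exact_mod_cast hw
  have hxm : 0 ≤ x - m := by rw [hm]; linarith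
  have hcast : ∀ i ∈ range w, (i : ℝ) ≤ w - 1 ∧ ((w - 1 - i : ℕ) : ℝ) = 2 * m - i := by
    intro i hi
    have hiw := mem_range.mp hi
    refine ⟨by rw [le_sub_iff_add_le]; exact_mod_cast hiw, ?_⟩
    rw [Nat.cast_sub (by omega), Nat.cast_sub hw]
    ring
  -- `(z - i) * (z - (w - 1 - i)) = (z - m) ^ 2 - (m - i) ^ 2`
  have hpair : ∀ i ∈ range w, (x - i) * (x - (w - 1 - i : ℕ)) * (y - m) ^ 2 ≤
      (x - m) ^ 2 * ((y - i) * (y - (w - 1 - i : ℕ))) := by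
    intro i hi
    rw [(hcast i hi).2]
    have hsq : (x - m) ^ 2 ≤ (y - m) ^ 2 := pow_le_pow_left₀ hxm (by linarith) 2
    nlinarith [mul_le_mul_of_nonneg_left hsq (sq_nonneg (m - i))]
  have hnonneg : 0 ≤ (x - m) ^ w * ∏ i ∈ range w, (y - i) :=
    mul_nonneg (pow_nonneg hxm _)
      (prod_nonneg fun i hi => by linarith [(hcast i hi).1])
  refine (abs_le_of_sq_le_sq' ?_ hnonneg).2
  calc ((∏ i ∈ range w, (x - i)) * (y - m) ^ w) ^ 2
      = ∏ i ∈ range w, (x - i) * (x - (w - 1 - i : ℕ)) * (y - m) ^ 2 := by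
        rw [prod_mul_distrib, prod_const, card_range, mul_pow,
          prod_range_sq_eq_prod_mul_reflect, pow_right_comm]
    _ ≤ ∏ i ∈ range w, (x - m) ^ 2 * ((y - i) * (y - (w - 1 - i : ℕ))) := by
        refine prod_le_prod (fun i hi => ?_) hpair
        obtain ⟨hiw, hrefl⟩ := hcast i hi
        rw [hrefl]
        have : 0 ≤ x - i := by linarith
        have : 0 ≤ x - (2 * m - i) := by rw [hm]; linarith
        positivity
    _ = ((x - m) ^ w * ∏ i ∈ range w, (y - i)) ^ 2 := by
        rw [prod_mul_distrib, prod_const, card_range, mul_pow,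
          prod_range_sq_eq_prod_mul_reflect, pow_right_comm]

lemma cast_choose_le_cast_choose_mul_pow {w s T : ℕ} (hws : w ≤ s) (hsT : s ≤ T) :
    (s.choose w : ℝ) ≤ T.choose w * ((s - (w - 1) / 2) / (T - (w - 1) / 2)) ^ w := by
  have hws' : (w : ℝ) ≤ s := by exact_mod_cast hws
  have hsT' : (s : ℝ) ≤ T := by exact_mod_cast hsT
  have hTm : 0 < (T : ℝ) - (w - 1) / 2 := by linarith
  have key := prod_range_sub_mul_pow_le w (by linarith) hsT'
  simp only [Nat.cast_choose_eq_descPochhammer_div, descPochhammer_eval_eq_prod_range]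
  rw [div_pow, div_le_iff₀ (by positivity), mul_comm, ← mul_assoc,
    mul_div_cancel₀ _ (by positivity), mul_div_assoc', le_div_iff₀ (pow_pos hTm w)]
  linarith

section CoverFree

variable {ι α : Type*} [Fintype ι] [DecidableEq ι] [DecidableEq α]

lemma card_filter_piFinset_le_mul {s : Finset α} (j : ι) (P : (ι → α) → Prop) [DecidablePred P]
    {m : ℕ} (h : ∀ f ∈ piFinset fun _ ↦ s, #{a ∈ s | P (update f j a)} ≤ m) :
    #{f ∈ piFinset (fun _ : ι ↦ s) | P f} ≤ m * #s ^ (card ι - 1) := by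
  rcases s.eq_empty_or_nonempty with rfl | ⟨a₀, ha₀⟩
  · have : piFinset (fun _ : ι ↦ (∅ : Finset α)) = ∅ := piFinset_eq_empty.mpr ⟨j, rfl⟩
    simp [this]
  -- forgetting the `j`-th coordinate, each fibre is parametrised by that coordinate
  have hforget : ∀ f ∈ piFinset (fun _ : ι ↦ s),
      update f j a₀ ∈ piFinset (update (fun _ : ι ↦ s) j {a₀}) := by
    intro f hf
    rw [mem_piFinset] at hf ⊢
    intro i
    rcases eq_or_ne i j with rfl | hij <;> simp [*]
  have hcard : #(piFinset (update (fun _ : ι ↦ s) j {a₀})) = #s ^ (card ι - 1) := by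
    simp only [card_piFinset, apply_update (fun _ ↦ Finset.card)]
    rw [prod_update_of_mem (mem_univ j)]
    simp [card_univ_sdiff]
  refine (card_le_mul_card_image_of_maps_to (fun f hf ↦ hforget f (mem_filter.mp hf).1) m
    fun g hg ↦ ?_).trans_eq (by rw [hcard])
  have hg' : g ∈ piFinset fun _ ↦ s := by
    rw [mem_piFinset] at hg ⊢
    intro i
    have := hg i
    rcases eq_or_ne i j with rfl | hij
    · simp_all
    · simpa [hij] using this
  have hrecover : ∀ f, update f j a₀ = g → update g j (f j) = f := by
    rintro f rfl
    rw [update_idem, update_eq_self]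
  refine (card_le_card_of_injOn (fun f ↦ f j) (fun f hf ↦ ?_) (fun f hf f' hf' hff' ↦ ?_)).trans
    (h g hg')
  · simp only [coe_filter, mem_filter, Set.mem_ofPred_eq] at hf ⊢
    exact ⟨mem_piFinset.mp hf.1.1 j, by rw [hrecover f hf.2]; exact hf.1.2⟩
  · simp only [coe_filter, mem_filter, Set.mem_ofPred_eq] at hf hf'
    rw [← hrecover f hf.2, ← hrecover f' hf'.2]
    exact congrArg (update g j) hff'

lemma card_filter_subset_biUnion_le {𝒱 : Finset (Finset α)} {w : ℕ} (h𝒱 : ∀ E ∈ 𝒱, #E = w)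
    {j : ι} {R : Finset ι} (hj : j ∉ R) :
    #{f ∈ piFinset (fun _ : ι ↦ 𝒱) | f j ⊆ R.biUnion f} ≤
      (w * #R).choose w * #𝒱 ^ (card ι - 1) := by
  refine card_filter_piFinset_le_mul j _ fun f hf ↦ ?_
  have hR : ∀ a, R.biUnion (update f j a) = R.biUnion f := fun a ↦
    biUnion_congr rfl fun i hi ↦ update_of_ne (ne_of_mem_of_not_mem hi hj) _ _
  have hunion : #(R.biUnion f) ≤ w * #R := by
    rw [mul_comm]
    exact card_biUnion_le_card_mul _ _ _ fun i _ ↦ (h𝒱 _ (mem_piFinset.mp hf i)).le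
  calc #{a ∈ 𝒱 | update f j a j ⊆ R.biUnion (update f j a)}
      ≤ #((R.biUnion f).powersetCard w) := by
        refine card_le_card fun a ha ↦ ?_
        simp only [mem_filter, update_self, hR] at ha
        exact mem_powersetCard.mpr ⟨ha.2, h𝒱 a ha.1⟩
    _ ≤ (w * #R).choose w := by
        rw [card_powersetCard]
        exact Nat.choose_le_choose w hunion

theorem exists_forall_not_subset_biUnion {𝒱 : Finset (Finset α)} {w : ℕ}
    (h𝒱 : ∀ E ∈ 𝒱, #E = w) (r : ℕ)
    (hlt : card ι * (card ι - 1).choose r * (w * r).choose w < #𝒱) :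
    ∃ f : ι → Finset α, (∀ i, f i ∈ 𝒱) ∧
      ∀ j R, j ∉ R → #R = r → ¬ f j ⊆ R.biUnion f := by
  set bad := univ.biUnion fun j : ι ↦ ((univ.erase j).powersetCard r).biUnion fun R ↦
    {f ∈ piFinset (fun _ : ι ↦ 𝒱) | f j ⊆ R.biUnion f}
  have hbad :
      #bad ≤ card ι * ((card ι - 1).choose r * ((w * r).choose w * #𝒱 ^ (card ι - 1))) := by
    refine (card_biUnion_le_card_mul _ _ _ fun j _ ↦ ?_).trans_eq (by rw [card_univ])
    refine (card_biUnion_le_card_mul _ _ ((w * r).choose w * #𝒱 ^ (card ι - 1))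
      fun R hR ↦ ?_).trans_eq ?_
    · obtain ⟨hRj, hRr⟩ := mem_powersetCard.mp hR
      rw [← hRr]
      exact card_filter_subset_biUnion_le h𝒱 fun hj ↦ by simpa using hRj hj
    · rw [card_powersetCard, card_erase_of_mem (mem_univ j), card_univ]
  have hlt' : #bad < #(piFinset fun _ : ι ↦ 𝒱) := by
    rw [card_piFinset, prod_const, card_univ]
    refine hbad.trans_lt ?_
    rcases (card ι).eq_zero_or_pos with h0 | hpos
    · simp [h0]
    have h𝒱pos : 0 < #𝒱 := (Nat.zero_le _).trans_lt hlt
    calc card ι * ((card ι - 1).choose r * ((w * r).choose w * #𝒱 ^ (card ι - 1)))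
        = card ι * (card ι - 1).choose r * (w * r).choose w * #𝒱 ^ (card ι - 1) := by ring
      _ < #𝒱 * #𝒱 ^ (card ι - 1) := by gcongr
      _ = #𝒱 ^ card ι := by rw [← pow_succ', Nat.sub_add_cancel hpos]
  obtain ⟨f, hf, hgood⟩ := exists_mem_notMem_of_card_lt_card hlt'
  refine ⟨f, mem_piFinset.mp hf, fun j R hj hR hcover ↦ hgood ?_⟩
  exact mem_biUnion.mpr ⟨j, mem_univ j, mem_biUnion.mpr ⟨R, mem_powersetCard.mpr
    ⟨fun i hi ↦ mem_erase.mpr ⟨ne_of_mem_of_not_mem hi hj, mem_univ i⟩, hR⟩,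
    mem_filter.mpr ⟨hf, hcover⟩⟩⟩

end CoverFree

def IsSeparated (d : ℕ) (E : Finset ℕ) : Prop :=
  ∀ a ∈ E, ∀ b ∈ E, a < b → a + d < b

instance (d : ℕ) : DecidablePred (IsSeparated d) := fun _ ↦ by
  unfold IsSeparated; infer_instance

def separatedSets (t d w : ℕ) : Finset (Finset ℕ) :=
  {E ∈ (range t).powersetCard w | IsSeparated d E}

lemma mem_separatedSets {t d w : ℕ} {E : Finset ℕ} :
    E ∈ separatedSets t d w ↔ E ⊆ range t ∧ #E = w ∧ IsSeparated d E := by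
  simp [separatedSets, and_assoc]

section Spread

variable (d : ℕ) (A : Finset ℕ)

def spread (a : ℕ) : ℕ := a + #{x ∈ A | x < a} * d

def unspread (E : Finset ℕ) (x : ℕ) : ℕ := x - #{y ∈ E | y < x} * d

variable {d A}

lemma spread_add_lt_spread {a b : ℕ} (ha : a ∈ A) (hab : a < b) :
    spread d A a + d < spread d A b := by
  have hsub : insert a {x ∈ A | x < a} ⊆ {x ∈ A | x < b} := by
    intro x hx
    rcases mem_insert.mp hx with rfl | hx
    · exact mem_filter.mpr ⟨ha, hab⟩
    · exact mem_filter.mpr ⟨(mem_filter.mp hx).1, (mem_filter.mp hx).2.trans hab⟩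
  have hcard := card_le_card hsub
  rw [card_insert_of_notMem (by simp)] at hcard
  have := Nat.mul_le_mul_right d hcard
  unfold spread
  nlinarith

lemma strictMonoOn_spread : StrictMonoOn (spread d A) A := fun _ ha _ _ hab ↦
  (Nat.le_add_right _ _).trans_lt (spread_add_lt_spread ha hab)

lemma unspread_spread {a : ℕ} (ha : a ∈ A) :
    unspread d (A.image (spread d A)) (spread d A a) = a := by
  have hrank : {x ∈ A.image (spread d A) | x < spread d A a} =
      {x ∈ A | x < a}.image (spread d A) := by
    ext x
    simp only [mem_filter, mem_image]
    constructor
    · rintro ⟨⟨b, hb, rfl⟩, hlt⟩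
      exact ⟨b, ⟨hb, (strictMonoOn_spread.lt_iff_lt hb ha).mp hlt⟩, rfl⟩
    · rintro ⟨b, ⟨hb, hlt⟩, rfl⟩
      exact ⟨⟨b, hb, rfl⟩, (strictMonoOn_spread.lt_iff_lt hb ha).mpr hlt⟩
  rw [unspread, hrank, card_image_of_injOn (strictMonoOn_spread.injOn.mono (filter_subset _ A)),
    spread, Nat.add_sub_cancel]

variable (d) in
lemma image_spread_injective : Function.Injective fun A : Finset ℕ ↦ A.image (spread d A) := by
  have hleft : ∀ A : Finset ℕ,
      (A.image (spread d A)).image (unspread d (A.image (spread d A))) = A := fun A ↦ by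
    rw [image_image]
    exact (image_congr fun a ha ↦ unspread_spread ha).trans image_id
  intro A B hAB
  rw [← hleft A, ← hleft B]
  exact congrArg (fun E ↦ E.image (unspread d E)) hAB

lemma isSeparated_image_spread : IsSeparated d (A.image (spread d A)) := by
  simp only [IsSeparated, mem_image]
  rintro _ ⟨a, ha, rfl⟩ _ ⟨b, hb, rfl⟩ hlt
  exact spread_add_lt_spread ha ((strictMonoOn_spread.lt_iff_lt ha hb).mp hlt)

lemma image_spread_mem_separatedSets {t w : ℕ}
    (hA : A ∈ (range (t - (w - 1) * d)).powersetCard w) :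
    A.image (spread d A) ∈ separatedSets t d w := by
  obtain ⟨hAr, hAw⟩ := mem_powersetCard.mp hA
  refine mem_filter.mpr ⟨mem_powersetCard.mpr ⟨fun x hx ↦ ?_, ?_⟩, isSeparated_image_spread⟩
  · obtain ⟨a, ha, rfl⟩ := mem_image.mp hx
    have hrank : #{x ∈ A | x < a} ≤ w - 1 := by
      rw [← hAw, ← card_erase_of_mem ha]
      exact card_le_card fun x hx ↦ mem_erase.mpr ⟨(mem_filter.mp hx).2.ne, (mem_filter.mp hx).1⟩
    have := mem_range.mp (hAr ha)
    have := Nat.mul_le_mul_right d hrank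
    rw [mem_range, spread]
    omega
  · rw [card_image_of_injOn strictMonoOn_spread.injOn, hAw]

end Spread

lemma choose_le_card_separatedSets (t d w : ℕ) :
    (t - (w - 1) * d).choose w ≤ #(separatedSets t d w) := by
  rw [← card_range (t - (w - 1) * d), ← card_powersetCard]
  exact card_le_card_of_injOn _ (fun A hA ↦ image_spread_mem_separatedSets hA)
    (image_spread_injective d).injOn

lemma card_filter_val_mem {t : ℕ} {E : Finset ℕ} (hE : E ⊆ range t) :
    #{i : Fin t | (i : ℕ) ∈ E} = #E := by
  rw [← card_attachFin E fun m hm ↦ mem_range.mp (hE hm)]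
  congr 1
  ext i
  simp

lemma isSuperimposedCode_of_forall_not_subset_biUnion {k n d t : ℕ} {f : Fin n → Finset ℕ}
    (hrange : ∀ j, f j ⊆ range t) (hsep : ∀ j, IsSeparated d (f j))
    (hfree : ∀ j R, j ∉ R → #R = k - 1 → ¬ f j ⊆ R.biUnion f) :
    IsSuperimposedCode k n d t fun i j ↦ decide ((i : ℕ) ∈ f j) := by
  refine ⟨fun j i i' hii' hi hi' ↦ ?_, fun S hS j hj ↦ ?_⟩
  · simp only [decide_eq_true_eq] at hi hi'
    exact hsep j _ hi _ hi' hii'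
  · obtain ⟨a, ha, hcover⟩ := not_subset.mp <|
      hfree j (S.erase j) (notMem_erase j S) (by rw [card_erase_of_mem hj, hS])
    refine ⟨⟨a, mem_range.mp (hrange j ha)⟩, by simpa using ha, fun j' hj' hne ↦ ?_⟩
    simp only [mem_biUnion, mem_erase, not_exists, not_and] at hcover
    simpa using hcover j' ⟨hne, hj'⟩

lemma mul_choose_mul_choose_lt {k n d w t : ℕ} (hk : 2 ≤ k) (hw : 0 < w)
    (hwt : w * (k - 1) + (w - 1) * d ≤ t)
    (hineq : (n : ℝ) * (Nat.choose (n - 1) (k - 1) : ℝ) *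
        (((w : ℝ) * ((k : ℝ) - 1) - ((w : ℝ) - 1) / 2) /
          ((t : ℝ) - ((w : ℝ) - 1) * (d : ℝ) - ((w : ℝ) - 1) / 2)) ^ w < 1) :
    n * (n - 1).choose (k - 1) * (w * (k - 1)).choose w < (t - (w - 1) * d).choose w := by
  have hws : w ≤ w * (k - 1) := Nat.le_mul_of_pos_right w (by omega)
  have hsT : w * (k - 1) ≤ t - (w - 1) * d := Nat.le_sub_of_add_le hwt
  have hchoose := cast_choose_le_cast_choose_mul_pow hws hsT
  push_cast [Nat.cast_sub (by omega : 1 ≤ k), Nat.cast_sub (by omega : 1 ≤ w),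
    Nat.cast_sub (by omega : (w - 1) * d ≤ t)] at hchoose
  have hpos : (0 : ℝ) < (t - (w - 1) * d).choose w := by
    exact_mod_cast Nat.choose_pos (hws.trans hsT)
  have hbound := mul_le_mul_of_nonneg_left hchoose
    (by positivity : (0 : ℝ) ≤ n * (n - 1).choose (k - 1))
  have hlt : (n * (n - 1).choose (k - 1) * (w * (k - 1)).choose w : ℝ) <
      (t - (w - 1) * d).choose w := by
    nlinarith
  exact_mod_cast hlt

theorem stmt_4_general (k n d w t : ℕ) (hk : 2 ≤ k) (hw : 0 < w)
    (hwt : w * (k - 1) + (w - 1) * d ≤ t)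
    (hineq : (n : ℝ) * (Nat.choose (n - 1) (k - 1) : ℝ) *
        (((w : ℝ) * ((k : ℝ) - 1) - ((w : ℝ) - 1) / 2) /
          ((t : ℝ) - ((w : ℝ) - 1) * (d : ℝ) - ((w : ℝ) - 1) / 2)) ^ w < 1) :
    ∃ M : Fin t → Fin n → Bool, IsSuperimposedCode k n d t M ∧ ColWeight w M := by
  obtain ⟨f, hf, hfree⟩ := exists_forall_not_subset_biUnion
    (fun _ hE ↦ (mem_separatedSets.mp hE).2.1) (k - 1) (by
      rw [Fintype.card_fin]
      exact (mul_choose_mul_choose_lt hk hw hwt hineq).trans_le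
        (choose_le_card_separatedSets t d w))
  choose hrange hcard hsep using fun j ↦ mem_separatedSets.mp (hf j)
  refine ⟨_, isSuperimposedCode_of_forall_not_subset_biUnion hrange hsep hfree, fun j ↦ ?_⟩
  simpa [ColWeight, hcard j] using card_filter_val_mem (hrange j)

theorem stmt_4 (k n d w t : ℕ) (hk : 2 ≤ k) (hkn : k ≤ n) (hd : 0 < d) (hw : 0 < w)
    (ht : 0 < t) (hwt : w * (k - 1) + (w - 1) * d ≤ t)
    (hineq : (n : ℝ) * (Nat.choose (n - 1) (k - 1) : ℝ) *
        (((w : ℝ) * ((k : ℝ) - 1) - ((w : ℝ) - 1) / 2) /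
          ((t : ℝ) - ((w : ℝ) - 1) * (d : ℝ) - ((w : ℝ) - 1) / 2)) ^ w < 1) :
    ∃ M : Fin t → Fin n → Bool, IsSuperimposedCode k n d t M ∧ ColWeight w M :=
  stmt_4_general k n d w t hk hw hwt hineq
end

section
/- There exists a constant c₀ ≥ 0 such that for all positive integers n, k, d with 2 ≤ k and e·k ≤ n, there exists a (k,n,d)-superimposed code of length t with t ≤ ln(2) · d·k·log₂(n/k) + e² · k²·log₂(n/k) − ((3e² − ln 2)/2) · k·log₂(n/k) − d + c₀. -/
namespace SIC

lemma identity_code (n k d : ℕ) :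
    IsSuperimposedCode k n d n (fun i j => decide ((i:ℕ) = (j:ℕ))) := by
  constructor
  · intro j i1 i2 h12 h1 h2
    have e1 : (i1:ℕ) = (j:ℕ) := of_decide_eq_true h1
    have e2 : (i2:ℕ) = (j:ℕ) := of_decide_eq_true h2
    have : (i1:ℕ) < (i2:ℕ) := h12
    omega
  · intro S hS j hj
    refine ⟨⟨(j:ℕ), j.isLt⟩, decide_eq_true rfl, ?_⟩
    intro j' hj' hne
    apply decide_eq_false
    intro h
    exact hne (Fin.ext h.symm)


lemma Ck_lower {x l2 e2 kk : ℝ} (h : x * l2 = e2*kk - (3*e2 - l2)/2)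
    (he2l : 7.389056098 ≤ e2) (hl2l : 0.6931471803 < l2) (hl2u : l2 < 0.6931471808)
    (hkk : 2 ≤ kk) : 5.8297 ≤ x := by
  nlinarith [mul_nonneg (sub_nonneg.2 hkk) (le_trans (by norm_num : (0:ℝ) ≤ 7.389056098) he2l)]

lemma Ck_lower' {x l2 e2 kk : ℝ} (h : x * l2 = e2*kk - (3*e2 - l2)/2)
    (he2l : 7.389056098 ≤ e2) (hl2l : 0.6931471803 < l2) (hl2u : l2 < 0.6931471808)
    (hkk : 2 ≤ kk) : 5.58*(kk-1) + 0.186 ≤ x := by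
  have he2pos : (0:ℝ) ≤ e2 - 5.58*l2 := by nlinarith
  nlinarith [mul_nonneg (sub_nonneg.2 hkk) he2pos]

end SIC

open Finset

namespace SIC

variable {t' : ℕ} (w d : ℕ)

/-- position of `s` in the `d`-expanded version of the set `A`. -/
def posn (A : Finset (Fin t')) (s : Fin t') : ℕ :=
  (s : ℕ) + min ((A.filter (fun a => a < s)).card) (w - 1) * d

/-- the `d`-expanded version of a `w`-subset `A` of `Fin t'`, as a set of naturals. -/
def exA (A : Finset (Fin t')) : Finset ℕ := A.image (posn w d A)

variable {w d}

lemma rank_le {A : Finset (Fin t')} (hA : A.card = w) {s : Fin t'} (hs : s ∈ A) :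
    (A.filter (fun a => a < s)).card ≤ w - 1 := by
  have hsub : A.filter (fun a => a < s) ⊆ A.erase s := by
    intro a ha
    rw [Finset.mem_filter] at ha
    exact Finset.mem_erase.2 ⟨ne_of_lt ha.2, ha.1⟩
  calc (A.filter (fun a => a < s)).card ≤ (A.erase s).card := Finset.card_le_card hsub
    _ = w - 1 := by rw [Finset.card_erase_of_mem hs, hA]

lemma posn_eq {A : Finset (Fin t')} (hA : A.card = w) {s : Fin t'} (hs : s ∈ A) :
    posn w d A s = (s : ℕ) + (A.filter (fun a => a < s)).card * d := by
  rw [posn, min_eq_left (rank_le hA hs)]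

lemma posn_gap {A : Finset (Fin t')} (hA : A.card = w) {s s' : Fin t'}
    (hs : s ∈ A) (hs' : s' ∈ A) (h : s < s') :
    posn w d A s + d + 1 ≤ posn w d A s' := by
  rw [posn_eq hA hs, posn_eq hA hs']
  have hsub : insert s (A.filter (fun a => a < s)) ⊆ A.filter (fun a => a < s') := by
    intro a ha
    rcases Finset.mem_insert.1 ha with rfl | ha
    · exact Finset.mem_filter.2 ⟨hs, h⟩
    · rw [Finset.mem_filter] at ha ⊢
      exact ⟨ha.1, lt_trans ha.2 h⟩
  have hcard : (A.filter (fun a => a < s)).card + 1 ≤ (A.filter (fun a => a < s')).card := by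
    have := Finset.card_le_card hsub
    rwa [Finset.card_insert_of_notMem (by simp)] at this
  have hss' : (s : ℕ) + 1 ≤ (s' : ℕ) := h
  calc (s : ℕ) + (A.filter (fun a => a < s)).card * d + d + 1
      = ((s : ℕ) + 1) + ((A.filter (fun a => a < s)).card + 1) * d := by ring
    _ ≤ (s' : ℕ) + (A.filter (fun a => a < s')).card * d :=
        add_le_add hss' (Nat.mul_le_mul_right d hcard)

lemma posn_lt {A : Finset (Fin t')} (hA : A.card = w) {s s' : Fin t'}
    (hs : s ∈ A) (hs' : s' ∈ A) (h : s < s') : posn w d A s < posn w d A s' :=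
  lt_of_lt_of_le (by omega) (posn_gap hA hs hs' h)

lemma posn_injOn {A : Finset (Fin t')} (hA : A.card = w) :
    Set.InjOn (posn w d A) A := by
  intro a ha b hb hab
  by_contra hne
  rcases lt_or_gt_of_ne hne with h | h
  · exact absurd hab (ne_of_lt (posn_lt hA ha hb h))
  · exact absurd hab.symm (ne_of_lt (posn_lt hA hb ha h))

lemma card_exA {A : Finset (Fin t')} (hA : A.card = w) : (exA w d A).card = w := by
  rw [exA, Finset.card_image_of_injOn (posn_injOn hA), hA]

lemma mem_exA_lt {A : Finset (Fin t')} {i : ℕ} (hi : i ∈ exA w d A) :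
    i < t' + (w - 1) * d := by
  rcases Finset.mem_image.1 hi with ⟨s, _, rfl⟩
  have h1 : (s : ℕ) < t' := s.isLt
  have h2 : min ((A.filter (fun a => a < s)).card) (w - 1) * d ≤ (w - 1) * d :=
    Nat.mul_le_mul_right d (min_le_right _ _)
  rw [posn]; omega

lemma exA_filter {A : Finset (Fin t')} (hA : A.card = w) {s : Fin t'} (hs : s ∈ A) :
    (exA w d A).filter (fun e => e < posn w d A s)
      = (A.filter (fun a => a < s)).image (posn w d A) := by
  ext e
  simp only [exA, Finset.mem_filter, Finset.mem_image]
  constructor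
  · rintro ⟨⟨a, ha, rfl⟩, hlt⟩
    refine ⟨a, ⟨ha, ?_⟩, rfl⟩
    rcases lt_trichotomy a s with h | h | h
    · exact h
    · exact absurd hlt (by rw [h]; exact lt_irrefl _)
    · exact absurd (posn_lt hA hs ha h) (not_lt.2 (le_of_lt hlt))
  · rintro ⟨a, ⟨ha, has⟩, rfl⟩
    exact ⟨⟨a, ha, rfl⟩, posn_lt hA ha hs has⟩

lemma exA_recover {A : Finset (Fin t')} (hA : A.card = w) {s : Fin t'} (hs : s ∈ A) :
    posn w d A s - ((exA w d A).filter (fun e' => e' < posn w d A s)).card * d = (s : ℕ) := by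
  rw [exA_filter hA hs,
    Finset.card_image_of_injOn ((posn_injOn hA).mono (by
      intro a ha; exact (Finset.mem_filter.1 ha).1)),
    posn_eq hA hs]
  omega

lemma image_val_eq {A : Finset (Fin t')} (hA : A.card = w) :
    A.image (fun (a : Fin t') => (a : ℕ))
      = (exA w d A).image (fun e => e - ((exA w d A).filter (fun e' => e' < e)).card * d) := by
  rw [exA, Finset.image_image]
  exact (Finset.image_congr (fun s hs => exA_recover hA hs)).symm

lemma exA_inj {A B : Finset (Fin t')} (hA : A.card = w) (hB : B.card = w)
    (h : exA w d A = exA w d B) : A = B := by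
  have h1 := image_val_eq (d := d) hA
  have h2 := image_val_eq (d := d) hB
  rw [← h] at h2
  exact Finset.image_injective (fun a b hab => Fin.ext hab) (h1.trans h2.symm)

lemma card_bad_cols (U : Finset ℕ) :
    (((Finset.univ : Finset (Fin t')).powersetCard w).filter
        (fun A => exA w d A ⊆ U)).card ≤ U.card.choose w := by
  rw [← Finset.card_powersetCard w U]
  apply Finset.card_le_card_of_injOn (exA w d)
  · intro A hA
    rw [Finset.mem_coe, Finset.mem_filter, Finset.mem_powersetCard] at hA
    exact Finset.mem_powersetCard.2 ⟨hA.2, card_exA hA.1.2⟩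
  · intro A hA B hB hAB
    rw [Finset.coe_filter, Set.mem_setOf_eq, Finset.mem_powersetCard] at hA hB
    exact exA_inj hA.1.2 hB.1.2 hAB

end SIC

namespace SIC

theorem exists_code (n k w d t' : ℕ) (hw : 1 ≤ w) (hk : 1 ≤ k) (hn : 1 ≤ n)
    (hlt : k * n.choose k * (((k - 1) * w).choose w) < t'.choose w) :
    ∃ M : Fin (t' + (w - 1) * d) → Fin n → Bool,
      IsSuperimposedCode k n d (t' + (w - 1) * d) M := by
  classical
  have hC : 0 < t'.choose w := Nat.lt_of_le_of_lt (Nat.zero_le _) hlt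
  set C := t'.choose w with hCdef
  set P : Finset (Finset (Fin t')) := (Finset.univ : Finset (Fin t')).powersetCard w with hP
  have hPcard : P.card = C := by
    rw [hP, Finset.card_powersetCard, Finset.card_univ, Fintype.card_fin]
  set Ω : Finset (Fin n → Finset (Fin t')) := Fintype.piFinset (fun _ => P) with hΩ
  have hΩcard : Ω.card = C ^ n := by
    rw [hΩ, Fintype.card_piFinset]
    simp [hPcard]
  have hmemP : ∀ {A : Finset (Fin t')}, A ∈ P → A.card = w := by
    intro A hA
    exact (Finset.mem_powersetCard.1 hA).2
  set Good : (Fin n → Finset (Fin t')) → Prop := fun f =>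
    ∀ S : Finset (Fin n), S.card = k → ∀ j ∈ S, ∃ i ∈ exA w d (f j),
      ∀ j' ∈ S, j' ≠ j → i ∉ exA w d (f j') with hGood
  set Bad : Fin n → Finset (Fin n) → Finset (Fin n → Finset (Fin t')) := fun j S' =>
    Ω.filter (fun f => exA w d (f j) ⊆ S'.biUnion (fun j' => exA w d (f j'))) with hBadDef
  -- bound the size of each bad set
  have hBadcard : ∀ j : Fin n, ∀ S' ∈ ((Finset.univ : Finset (Fin n)).erase j).powersetCard (k - 1),
      (Bad j S').card ≤ (((k - 1) * w).choose w) * C ^ (n - 1) := by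
    intro j S' hS'
    rw [Finset.mem_powersetCard] at hS'
    have hjS' : j ∉ S' := fun h => (Finset.mem_erase.1 (hS'.1 h)).1 rfl
    have step1 : (Bad j S').card ≤ (((k - 1) * w).choose w) *
        ((Bad j S').image (fun g => Function.update g j ∅)).card := by
      apply Finset.card_le_mul_card_image
      intro b hb
      -- the fiber over b injects into the bad columns w.r.t. U
      set U : Finset ℕ := S'.biUnion (fun j' => exA w d (b j')) with hU
      have hUcard : U.card ≤ (k - 1) * w := by
        calc U.card ≤ ∑ j' ∈ S', (exA w d (b j')).card := Finset.card_biUnion_le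
          _ ≤ ∑ j' ∈ S', w := by
              apply Finset.sum_le_sum
              intro j' hj'
              rcases Finset.mem_image.1 hb with ⟨g, hg, rfl⟩
              have hgΩ : g ∈ Ω := (Finset.mem_filter.1 hg).1
              have : Function.update g j ∅ j' = g j' :=
                Function.update_of_ne (fun (h : j' = j) => hjS' (h ▸ hj')) _ _
              rw [this, card_exA (hmemP (Fintype.mem_piFinset.1 hgΩ j'))]
          _ = (k - 1) * w := by rw [Finset.sum_const, smul_eq_mul, hS'.2]
      calc ((Bad j S').filter (fun g => Function.update g j ∅ = b)).card
          ≤ (P.filter (fun A => exA w d A ⊆ U)).card := by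
            apply Finset.card_le_card_of_injOn (fun g => g j)
            · intro g hg
              rw [Finset.mem_coe, Finset.mem_filter] at hg
              have hgBad := Finset.mem_filter.1 hg.1
              have hgΩ : g ∈ Ω := hgBad.1
              refine Finset.mem_filter.2 ⟨Fintype.mem_piFinset.1 hgΩ j, ?_⟩
              refine subset_trans hgBad.2 ?_
              intro i hi
              rcases Finset.mem_biUnion.1 hi with ⟨j', hj', hij'⟩
              refine Finset.mem_biUnion.2 ⟨j', hj', ?_⟩
              have : b j' = g j' := by
                rw [← hg.2]
                exact Function.update_of_ne (fun (h : j' = j) => hjS' (h ▸ hj')) _ _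
              rwa [this]
            · intro g1 hg1 g2 hg2 hj12
              rw [Finset.coe_filter, Set.mem_setOf_eq] at hg1 hg2
              funext i
              by_cases hij : i = j
              · rw [hij]; exact hj12
              · have e1 := congrFun hg1.2 i
                have e2 := congrFun hg2.2 i
                rw [Function.update_of_ne hij] at e1 e2
                rw [e1, e2]
        _ ≤ U.card.choose w := card_bad_cols U
        _ ≤ (((k - 1) * w).choose w) := Nat.choose_le_choose w hUcard
    have step2 : ((Bad j S').image (fun g => Function.update g j ∅)).card ≤ C ^ (n - 1) := by
      have hsub : (Bad j S').image (fun g => Function.update g j ∅) ⊆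
          Fintype.piFinset (fun i => if i = j then ({∅} : Finset (Finset (Fin t'))) else P) := by
        intro b hb
        rcases Finset.mem_image.1 hb with ⟨g, hg, rfl⟩
        have hgΩ : g ∈ Ω := (Finset.mem_filter.1 hg).1
        refine Fintype.mem_piFinset.2 (fun i => ?_)
        by_cases hij : i = j
        · subst hij; simp
        · rw [if_neg hij, Function.update_of_ne hij]
          exact Fintype.mem_piFinset.1 hgΩ i
      calc ((Bad j S').image (fun g => Function.update g j ∅)).card
          ≤ (Fintype.piFinset (fun i => if i = j then ({∅} : Finset (Finset (Fin t'))) else P)).card :=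
            Finset.card_le_card hsub
        _ = ∏ i : Fin n, (if i = j then ({∅} : Finset (Finset (Fin t'))) else P).card :=
            Fintype.card_piFinset _
        _ = C ^ (n - 1) := by
            rw [← Finset.mul_prod_erase Finset.univ _ (Finset.mem_univ j)]
            rw [if_pos rfl, Finset.card_singleton, one_mul]
            have : ∀ i ∈ Finset.univ.erase j,
                (if i = j then ({∅} : Finset (Finset (Fin t'))) else P).card = C := by
              intro i hi
              rw [if_neg (Finset.mem_erase.1 hi).1, hPcard]
            rw [Finset.prod_congr rfl this, Finset.prod_const, Finset.card_erase_of_mem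
              (Finset.mem_univ j), Finset.card_univ, Fintype.card_fin]
    calc (Bad j S').card ≤ (((k - 1) * w).choose w) *
        ((Bad j S').image (fun g => Function.update g j ∅)).card := step1
      _ ≤ (((k - 1) * w).choose w) * C ^ (n - 1) := Nat.mul_le_mul_left _ step2
  -- the set of all bad functions
  set BadAll : Finset (Fin n → Finset (Fin t')) := Ω.filter (fun f => ¬ Good f) with hBadAll
  have hsubBad : BadAll ⊆ Finset.univ.biUnion (fun j =>
      (((Finset.univ : Finset (Fin n)).erase j).powersetCard (k - 1)).biUnion
        (fun S' => Bad j S')) := by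
    intro f hf
    rw [Finset.mem_filter] at hf
    obtain ⟨hfΩ, hnG⟩ := hf
    simp only [hGood] at hnG
    push_neg at hnG
    obtain ⟨S, hSk, j, hjS, hno⟩ := hnG
    refine Finset.mem_biUnion.2 ⟨j, Finset.mem_univ j, ?_⟩
    refine Finset.mem_biUnion.2 ⟨S.erase j, ?_, ?_⟩
    · refine Finset.mem_powersetCard.2 ⟨?_, by rw [Finset.card_erase_of_mem hjS, hSk]⟩
      intro x hx
      rw [Finset.mem_erase] at hx ⊢
      exact ⟨hx.1, Finset.mem_univ x⟩
    · refine Finset.mem_filter.2 ⟨hfΩ, ?_⟩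
      intro i hi
      obtain ⟨j', hj'S, hj'ne, hij'⟩ := hno i hi
      exact Finset.mem_biUnion.2 ⟨j', Finset.mem_erase.2 ⟨hj'ne, hj'S⟩, hij'⟩
  have hBadAllcard : BadAll.card < Ω.card := by
    have h1 : BadAll.card ≤ n * ((n - 1).choose (k - 1) *
        ((((k - 1) * w).choose w) * C ^ (n - 1))) := by
      calc BadAll.card ≤ (Finset.univ.biUnion (fun j =>
            (((Finset.univ : Finset (Fin n)).erase j).powersetCard (k - 1)).biUnion
              (fun S' => Bad j S'))).card := Finset.card_le_card hsubBad
        _ ≤ ∑ j : Fin n, ((((Finset.univ : Finset (Fin n)).erase j).powersetCard (k - 1)).biUnion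
              (fun S' => Bad j S')).card := Finset.card_biUnion_le
        _ ≤ ∑ j : Fin n, ((n - 1).choose (k - 1) * ((((k - 1) * w).choose w) * C ^ (n - 1))) := by
            apply Finset.sum_le_sum
            intro j _
            calc ((((Finset.univ : Finset (Fin n)).erase j).powersetCard (k - 1)).biUnion
                  (fun S' => Bad j S')).card
                ≤ ∑ S' ∈ ((Finset.univ : Finset (Fin n)).erase j).powersetCard (k - 1),
                    (Bad j S').card := Finset.card_biUnion_le
              _ ≤ ∑ S' ∈ ((Finset.univ : Finset (Fin n)).erase j).powersetCard (k - 1),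
                    ((((k - 1) * w).choose w) * C ^ (n - 1)) :=
                  Finset.sum_le_sum (hBadcard j)
              _ = (((Finset.univ : Finset (Fin n)).erase j).powersetCard (k - 1)).card *
                    ((((k - 1) * w).choose w) * C ^ (n - 1)) := by
                  rw [Finset.sum_const, smul_eq_mul]
              _ = (n - 1).choose (k - 1) * ((((k - 1) * w).choose w) * C ^ (n - 1)) := by
                  rw [Finset.card_powersetCard, Finset.card_erase_of_mem (Finset.mem_univ j),
                    Finset.card_univ, Fintype.card_fin]
        _ = n * ((n - 1).choose (k - 1) * ((((k - 1) * w).choose w) * C ^ (n - 1))) := by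
            rw [Finset.sum_const, Finset.card_univ, Fintype.card_fin, smul_eq_mul]
    have hid : n * (n - 1).choose (k - 1) = k * n.choose k := by
      obtain ⟨m, rfl⟩ : ∃ m, n = m + 1 := ⟨n - 1, by omega⟩
      obtain ⟨l, rfl⟩ : ∃ l, k = l + 1 := ⟨k - 1, by omega⟩
      simp only [Nat.add_sub_cancel]
      have h := Nat.add_one_mul_choose_eq m l
      rw [h]; ring
    have h2 : BadAll.card ≤ (k * n.choose k * (((k - 1) * w).choose w)) * C ^ (n - 1) := by
      calc BadAll.card ≤ n * ((n - 1).choose (k - 1) *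
          ((((k - 1) * w).choose w) * C ^ (n - 1))) := h1
        _ = (n * (n - 1).choose (k - 1)) * (((k - 1) * w).choose w) * C ^ (n - 1) := by ring
        _ = (k * n.choose k * (((k - 1) * w).choose w)) * C ^ (n - 1) := by rw [hid]
    calc BadAll.card ≤ (k * n.choose k * (((k - 1) * w).choose w)) * C ^ (n - 1) := h2
      _ < C * C ^ (n - 1) := by
          exact mul_lt_mul_of_pos_right hlt (pow_pos hC _)
      _ = C ^ n := by
          rw [← pow_succ']
          congr 1
          omega
      _ = Ω.card := hΩcard.symm
  -- extract a good function
  have hgoodex : ∃ f ∈ Ω, Good f := by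
    by_contra hcon
    push_neg at hcon
    have : BadAll = Ω := by
      apply Finset.Subset.antisymm (Finset.filter_subset _ _)
      intro f hf
      exact Finset.mem_filter.2 ⟨hf, hcon f hf⟩
    rw [this] at hBadAllcard
    exact lt_irrefl _ hBadAllcard
  obtain ⟨f, hfΩ, hfGood⟩ := hgoodex
  have hfcard : ∀ j, (f j).card = w := fun j => hmemP (Fintype.mem_piFinset.1 hfΩ j)
  refine ⟨fun i j => decide ((i : ℕ) ∈ exA w d (f j)), ?_, ?_⟩
  · -- run-length constraint
    intro j i1 i2 h12 hm1 hm2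
    have h1 : (i1 : ℕ) ∈ exA w d (f j) := of_decide_eq_true hm1
    have h2 : (i2 : ℕ) ∈ exA w d (f j) := of_decide_eq_true hm2
    rcases Finset.mem_image.1 h1 with ⟨s1, hs1, hp1⟩
    rcases Finset.mem_image.1 h2 with ⟨s2, hs2, hp2⟩
    have hfj := hfcard j
    rcases lt_trichotomy s1 s2 with h | h | h
    · have := posn_gap (d := d) hfj hs1 hs2 h
      rw [hp1, hp2] at this
      exact this
    · exfalso
      rw [h, hp2] at hp1
      have : i1 = i2 := Fin.ext hp1.symm
      rw [this] at h12
      exact lt_irrefl _ h12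
    · exfalso
      have := posn_lt (d := d) hfj hs2 hs1 h
      rw [hp1, hp2] at this
      have hlt' : (i1 : ℕ) < (i2 : ℕ) := h12
      omega
  · -- cover property
    intro S hS j hj
    obtain ⟨i, hiex, havoid⟩ := hfGood S hS j hj
    refine ⟨⟨i, mem_exA_lt hiex⟩, decide_eq_true hiex, ?_⟩
    intro j' hj' hne
    exact decide_eq_false (havoid j' hj' hne)

end SIC

namespace SIC

lemma pow_le_fact_mul_exp : ∀ k : ℕ, 1 ≤ k → (k:ℝ)^k ≤ (k.factorial : ℝ) * Real.exp ((k:ℝ) - 1) := by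
  intro k hk
  induction k, hk using Nat.le_induction with
  | base => simp
  | succ k hk ih =>
    have hkpos : (0:ℝ) < (k:ℝ) := by exact_mod_cast hk
    have h1 : ((1:ℝ) + 1/(k:ℝ))^k ≤ Real.exp 1 := by
      have h2 : (1:ℝ) + 1/(k:ℝ) ≤ Real.exp (1/(k:ℝ)) := by
        have := Real.add_one_le_exp (1/(k:ℝ)); linarith
      calc ((1:ℝ) + 1/(k:ℝ))^k ≤ (Real.exp (1/(k:ℝ)))^k := by
            apply pow_le_pow_left₀ (by positivity) h2
        _ = Real.exp ((k:ℝ) * (1/(k:ℝ))) := (Real.exp_nat_mul _ k).symm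
        _ = Real.exp 1 := by rw [mul_one_div, div_self (ne_of_gt hkpos)]
    have hsucc : ((k:ℝ) + 1)^k ≤ (k:ℝ)^k * Real.exp 1 := by
      have : ((k:ℝ) + 1)^k = ((1 + 1/(k:ℝ)) * (k:ℝ))^k := by
        congr 1; field_simp
      rw [this, mul_pow]
      exact mul_le_mul_of_nonneg_right (by calc ((1:ℝ)+1/(k:ℝ))^k ≤ Real.exp 1 := h1) (by positivity) |>.trans
        (by rw [mul_comm])
    have cast1 : ((k+1:ℕ):ℝ) = (k:ℝ) + 1 := by push_cast; ring
    rw [cast1]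
    calc ((k:ℝ) + 1)^(k+1) = ((k:ℝ)+1) * ((k:ℝ)+1)^k := by ring
      _ ≤ ((k:ℝ)+1) * ((k:ℝ)^k * Real.exp 1) := by
          apply mul_le_mul_of_nonneg_left hsucc (by positivity)
      _ ≤ ((k:ℝ)+1) * (((k.factorial:ℝ) * Real.exp ((k:ℝ)-1)) * Real.exp 1) := by
          apply mul_le_mul_of_nonneg_left (mul_le_mul_of_nonneg_right ih (Real.exp_pos 1).le) (by positivity)
      _ = (((k:ℝ)+1) * (k.factorial:ℝ)) * (Real.exp ((k:ℝ)-1) * Real.exp 1) := by ring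
      _ = ((k+1).factorial : ℝ) * Real.exp (((k:ℝ)+1) - 1) := by
          rw [← Real.exp_add, Nat.factorial_succ]
          push_cast
          ring_nf
  
lemma choose_ratio (a b : ℕ) (hab : a ≤ b) : ∀ w : ℕ, a.choose w * b^w ≤ b.choose w * a^w := by
  intro w
  induction w with
  | zero => simp
  | succ w ih =>
    by_cases hwa : a ≤ w
    · rw [Nat.choose_eq_zero_of_lt (by omega)]
      simp
    · push_neg at hwa   -- w < a
      have key : (a - w) * b ≤ (b - w) * a := by
        have h1 : w * a ≤ w * b := Nat.mul_le_mul_left w hab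
        have h2 : w * b ≤ a * b := Nat.mul_le_mul_right b (le_of_lt hwa)
        have e1 : (a - w) * b = a * b - w * b := Nat.sub_mul a w b
        have e2 : (b - w) * a = a * b - w * a := by rw [Nat.sub_mul, Nat.mul_comm b a]
        omega
      have H : (a.choose w * b^w) * ((a - w) * b) ≤ (b.choose w * a^w) * ((b - w) * a) :=
        Nat.mul_le_mul ih key
      have ha' : a.choose (w+1) * (w+1) * b^(w+1) = (a.choose w * b^w) * ((a-w) * b) := by
        rw [Nat.choose_succ_right_eq]; ring
      have hb' : b.choose (w+1) * (w+1) * a^(w+1) = (b.choose w * a^w) * ((b-w) * a) := by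
        rw [Nat.choose_succ_right_eq]; ring
      have H2 : a.choose (w+1) * (w+1) * b^(w+1) ≤ b.choose (w+1) * (w+1) * a^(w+1) := by
        rw [ha', hb']; exact H
      have H3 : (a.choose (w+1) * b^(w+1)) * (w+1) ≤ (b.choose (w+1) * a^(w+1)) * (w+1) := by
        calc (a.choose (w+1) * b^(w+1)) * (w+1) = a.choose (w+1) * (w+1) * b^(w+1) := by ring
          _ ≤ b.choose (w+1) * (w+1) * a^(w+1) := H2
          _ = (b.choose (w+1) * a^(w+1)) * (w+1) := by ring
      exact Nat.le_of_mul_le_mul_right H3 (Nat.succ_pos w)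

lemma log_le_half {x : ℝ} (hx : 1 ≤ x) : Real.log x ≤ x / 2 := by
  have hx0 : (0:ℝ) < x := by linarith
  have h1 : Real.log x = 2 * Real.log (Real.sqrt x) := by
    rw [Real.log_sqrt hx0.le]; ring
  have h2 : Real.log (Real.sqrt x) ≤ Real.sqrt x - 1 :=
    Real.log_le_sub_one_of_pos (Real.sqrt_pos.2 hx0)
  have h3 : Real.sqrt x ^ 2 = x := Real.sq_sqrt hx0.le
  nlinarith [sq_nonneg (Real.sqrt x - 2)]

lemma exp_069_le : Real.exp 0.69 ≤ 2 := by
  rw [← Real.exp_log (by norm_num : (0:ℝ) < 2)]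
  exact Real.exp_le_exp.2 (by linarith [Real.log_two_gt_d9])

lemma exp_169_le : Real.exp 1.69 ≤ 5.44 := by
  have h : (1.69:ℝ) = 1 + 0.69 := by norm_num
  rw [h, Real.exp_add]
  have h1 : Real.exp 1 ≤ 2.7182818286 := (Real.exp_one_lt_d9).le
  have h2 := exp_069_le
  nlinarith [Real.exp_pos (0.69:ℝ), Real.exp_pos (1:ℝ)]

lemma exp_07_le : Real.exp 0.7 ≤ 2.0141 := by
  have hl2u : Real.log 2 < 0.6931471808 := Real.log_two_lt_d9
  have hl2l : (0.6931471803:ℝ) < Real.log 2 := Real.log_two_gt_d9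
  have hu0 : 0 ≤ 0.7 - Real.log 2 := by nlinarith
  have hu1 : 0.7 - Real.log 2 ≤ 0.007 := by nlinarith
  have hexpu : Real.exp (0.7 - Real.log 2) ≤ 1.00705 := by
    have h2 : (0:ℝ) < 1 - (0.7 - Real.log 2) := by nlinarith
    have hmain : Real.exp (0.7 - Real.log 2) * (1 - (0.7 - Real.log 2)) ≤ 1 := by
      have h1 : 1 - (0.7 - Real.log 2) ≤ Real.exp (-(0.7 - Real.log 2)) := by
        have := Real.add_one_le_exp (-(0.7 - Real.log 2)); linarith
      calc Real.exp (0.7 - Real.log 2) * (1 - (0.7 - Real.log 2))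
          ≤ Real.exp (0.7 - Real.log 2) * Real.exp (-(0.7 - Real.log 2)) := by
            nlinarith [Real.exp_pos (0.7 - Real.log 2)]
        _ = 1 := by rw [← Real.exp_add]; simp
    nlinarith [Real.exp_pos (0.7 - Real.log 2)]
  have hsplit : Real.exp 0.7 = 2 * Real.exp (0.7 - Real.log 2) := by
    rw [← Real.exp_log (by norm_num : (0:ℝ) < 2), ← Real.exp_add]
    congr 1
    rw [Real.exp_log (by norm_num : (0:ℝ) < 2)]
    ring
  rw [hsplit]
  nlinarith [Real.exp_pos (0.7 - Real.log 2)]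

lemma exp_27_le : Real.exp 2.7 ≤ 14.89 := by
  have h : (2.7:ℝ) = 2 + 0.7 := by norm_num
  rw [h, Real.exp_add]
  have h2 : Real.exp 2 ≤ 7.3890561 := by
    have : (2:ℝ) = 1 + 1 := by norm_num
    rw [this, Real.exp_add]
    have h1 : Real.exp 1 ≤ 2.7182818286 := (Real.exp_one_lt_d9).le
    nlinarith [Real.exp_pos (1:ℝ)]
  calc Real.exp 2 * Real.exp 0.7 ≤ 7.3890561 * 2.0141 :=
        mul_le_mul h2 exp_07_le (Real.exp_pos _).le (by norm_num)
    _ ≤ 14.89 := by norm_num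

end SIC

set_option maxHeartbeats 2000000 in
theorem stmt_8 :
    ∃ c₀ : ℝ, 0 ≤ c₀ ∧ ∀ n k d : ℕ, 0 < n → 0 < k → 0 < d → 2 ≤ k →
      Real.exp 1 * (k : ℝ) ≤ (n : ℝ) →
      ∃ t : ℕ, (∃ M : Fin t → Fin n → Bool, IsSuperimposedCode k n d t M) ∧
        (t : ℝ) ≤ Real.log 2 * (d : ℝ) * (k : ℝ) * Real.logb 2 ((n : ℝ) / (k : ℝ)) +
            (Real.exp 1) ^ 2 * (k : ℝ) ^ 2 * Real.logb 2 ((n : ℝ) / (k : ℝ)) -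
            ((3 * (Real.exp 1) ^ 2 - Real.log 2) / 2) * (k : ℝ) *
              Real.logb 2 ((n : ℝ) / (k : ℝ)) - (d : ℝ) + c₀ := by
  refine ⟨0, le_rfl, ?_⟩
  intro n k d hn hk hd hk2 hekn
  have hkR2 : (2:ℝ) ≤ (k:ℝ) := by exact_mod_cast hk2
  have hkpos : (0:ℝ) < (k:ℝ) := by linarith
  have hdR : (1:ℝ) ≤ (d:ℝ) := by exact_mod_cast hd
  have hnpos : (0:ℝ) < (n:ℝ) := by exact_mod_cast hn
  have hnk0 : (0:ℝ) < (n:ℝ)/(k:ℝ) := by positivity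
  have hE1l : (2.7182818283:ℝ) < Real.exp 1 := Real.exp_one_gt_d9
  have hE1u : Real.exp 1 < 2.7182818286 := Real.exp_one_lt_d9
  have hE2l : (7.389056098:ℝ) ≤ (Real.exp 1)^2 := by nlinarith
  have hE2u : (Real.exp 1)^2 ≤ 7.389056101 := by nlinarith
  have hl2l : (0.6931471803:ℝ) < Real.log 2 := Real.log_two_gt_d9
  have hl2u : Real.log 2 < 0.6931471808 := Real.log_two_lt_d9
  obtain ⟨L, hLdef⟩ : ∃ L : ℝ, L = Real.log ((n:ℝ)/(k:ℝ)) := ⟨_, rfl⟩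
  have hL1 : 1 ≤ L := by
    rw [hLdef, Real.le_log_iff_exp_le hnk0, le_div_iff₀ hkpos]
    exact hekn
  have hexpL : Real.exp L = (n:ℝ)/(k:ℝ) := by rw [hLdef]; exact Real.exp_log hnk0
  have hlogb : Real.logb 2 ((n:ℝ)/(k:ℝ)) = L / Real.log 2 := by
    rw [hLdef, Real.logb]
  obtain ⟨Ck, hCk⟩ : ∃ c : ℝ,
      c = ((Real.exp 1)^2*(k:ℝ) - (3*(Real.exp 1)^2 - Real.log 2)/2)/Real.log 2 := ⟨_, rfl⟩
  have hl2pos : (0:ℝ) < Real.log 2 := by linarith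
  have hCkmul : Ck * Real.log 2 = (Real.exp 1)^2*(k:ℝ) - (3*(Real.exp 1)^2 - Real.log 2)/2 := by
    rw [hCk]; field_simp
  have hCka : 5.8297 ≤ Ck := SIC.Ck_lower hCkmul hE2l hl2l hl2u hkR2
  have hCkb : 5.58*((k:ℝ)-1) + 0.186 ≤ Ck := SIC.Ck_lower' hCkmul hE2l hl2l hl2u hkR2
  have hRHS : Real.log 2 * (d : ℝ) * (k : ℝ) * Real.logb 2 ((n : ℝ) / (k : ℝ)) +
      (Real.exp 1) ^ 2 * (k : ℝ) ^ 2 * Real.logb 2 ((n : ℝ) / (k : ℝ)) -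
      ((3 * (Real.exp 1) ^ 2 - Real.log 2) / 2) * (k : ℝ) *
        Real.logb 2 ((n : ℝ) / (k : ℝ)) - (d : ℝ) + 0
      = (d:ℝ)*((k:ℝ)*L) - (d:ℝ) + (k:ℝ)*L*Ck := by
    rw [hlogb, hCk]
    field_simp
    ring
  by_cases hidc : (n:ℝ) ≤ (k:ℝ)*L*Ck
  · -- identity code branch
    refine ⟨n, ⟨_, SIC.identity_code n k d⟩, ?_⟩
    rw [hRHS]
    have hkL2 : (2:ℝ) ≤ (k:ℝ)*L := by nlinarith [mul_le_mul hkR2 hL1 zero_le_one hkpos.le]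
    have hdk : (0:ℝ) ≤ (d:ℝ)*((k:ℝ)*L - 1) := mul_nonneg (by linarith) (by linarith)
    nlinarith
  · -- random coding branch
    push_neg at hidc
    have hn_eq : (n:ℝ) = (k:ℝ) * Real.exp L := by
      rw [hexpL]; field_simp
    have h5 : Ck * L < Real.exp L := by
      have h5' : (k:ℝ) * (Ck * L) < (k:ℝ) * Real.exp L := by
        rw [← hn_eq]; linarith [hidc]
      exact lt_of_mul_lt_mul_left h5' hkpos.le
    have hL27 : (2.7:ℝ) < L := by
      by_contra hcon
      push_neg at hcon
      have hθ0 : (0:ℝ) ≤ (2.7 - L)/1.7 := div_nonneg (by linarith) (by norm_num)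
      have hθ1 : (0:ℝ) ≤ (L - 1)/1.7 := div_nonneg (by linarith) (by norm_num)
      have hθs : (2.7 - L)/1.7 + (L - 1)/1.7 = 1 := by ring
      have hconv := convexOn_exp.2 (Set.mem_univ (1:ℝ)) (Set.mem_univ (2.7:ℝ)) hθ0 hθ1 hθs
      simp only [smul_eq_mul] at hconv
      have hinner : (2.7 - L)/1.7 * 1 + (L - 1)/1.7 * 2.7 = L := by ring
      rw [hinner] at hconv
      have hb1 : (2.7 - L)/1.7 * Real.exp 1 ≤ (2.7 - L)/1.7 * 2.7182818286 :=
        mul_le_mul_of_nonneg_left hE1u.le hθ0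
      have hb2 : (L - 1)/1.7 * Real.exp 2.7 ≤ (L - 1)/1.7 * 14.89 :=
        mul_le_mul_of_nonneg_left SIC.exp_27_le hθ1
      have hb3 : 5.8297 * L ≤ Ck * L := mul_le_mul_of_nonneg_right hCka (by linarith)
      linarith
    have hkL : (5.4:ℝ) < (k:ℝ)*L := by
      have h1 : (2:ℝ)*2.7 ≤ (k:ℝ)*2.7 := by linarith
      have h2 : (k:ℝ)*2.7 < (k:ℝ)*L := by
        have := mul_pos hkpos (show (0:ℝ) < L - 2.7 by linarith)
        nlinarith
      linarith
    -- parameters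
    have hkLpos : (0:ℝ) < (k:ℝ)*L := by linarith
    set w : ℕ := ⌈(k:ℝ)*L⌉₊ - 1 with hwdef
    have hceil1 : 1 ≤ ⌈(k:ℝ)*L⌉₊ := Nat.one_le_iff_ne_zero.2 (by
      have := Nat.ceil_pos.2 hkLpos; omega)
    have hwcast : (w:ℝ) = ((⌈(k:ℝ)*L⌉₊ : ℕ):ℝ) - 1 := by
      rw [hwdef, Nat.cast_sub hceil1, Nat.cast_one]
    have hwge : (k:ℝ)*L - 1 ≤ (w:ℝ) := by
      have := Nat.le_ceil ((k:ℝ)*L); rw [hwcast]; linarith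
    have hwle : (w:ℝ) ≤ (k:ℝ)*L := by
      have := Nat.ceil_lt_add_one hkLpos.le; rw [hwcast]; linarith
    have hw1 : 1 ≤ w := by
      have h1 : (1:ℝ) ≤ (w:ℝ) := by linarith
      exact_mod_cast h1
    set t' : ℕ := ⌊(k:ℝ)*L*Ck⌋₊ with ht'def
    have hTpos : (0:ℝ) ≤ (k:ℝ)*L*Ck :=
      mul_nonneg (by positivity) (by linarith)
    have ht'le : (t':ℝ) ≤ (k:ℝ)*L*Ck := Nat.floor_le hTpos
    have ht'gt : (k:ℝ)*L*Ck - 1 < (t':ℝ) := Nat.sub_one_lt_floor _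
    set a : ℕ := (k-1)*w with hadef
    have hk1 : 1 ≤ k := by omega
    have hacast : (a:ℝ) = ((k:ℝ)-1)*(w:ℝ) := by
      rw [hadef, Nat.cast_mul, Nat.cast_sub hk1, Nat.cast_one]
    have hapos : (0:ℝ) < (a:ℝ) := by
      rw [hacast]; exact mul_pos (by linarith) (by linarith)
    have hρ : 5.58 * (a:ℝ) ≤ (t':ℝ) := by
      have hCkb' : (0.186:ℝ) ≤ Ck - 5.58*((k:ℝ)-1) := by linarith
      have h6 : (5.4:ℝ) * 0.186 ≤ ((k:ℝ)*L) * (Ck - 5.58*((k:ℝ)-1)) :=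
        mul_le_mul hkL.le hCkb' (by norm_num) (by linarith)
      have h7 : (a:ℝ) ≤ ((k:ℝ)-1)*((k:ℝ)*L) := by
        rw [hacast]
        exact mul_le_mul_of_nonneg_left hwle (by linarith)
      nlinarith [h6, h7, ht'gt]
    have hat' : a ≤ t' := by
      have : (a:ℝ) ≤ (t':ℝ) := by linarith
      exact_mod_cast this
    have hwa : w ≤ a := by
      rw [hadef]
      exact Nat.le_mul_of_pos_left w (by omega)
    have hchooset' : 0 < t'.choose w := Nat.choose_pos (le_trans hwa hat')
    -- key exponent inequality
    have hlnk : Real.log (k:ℝ) ≤ (k:ℝ)/2 := SIC.log_le_half (by linarith)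
    have hmain : Real.log (k:ℝ) + (k:ℝ)*L + ((k:ℝ) - 1) < 1.69 * (w:ℝ) := by
      have hkL27 : (0:ℝ) ≤ ((k:ℝ))*(L - 2.7) := mul_nonneg (by linarith) (by linarith)
      linarith [hwge, hlnk, hkL27, hkR2]
    -- bound on k * choose n k
    have hchoosen : ((n.choose k : ℕ):ℝ) * (k.factorial:ℝ) ≤ (n:ℝ)^k := by
      have h2 : n.choose k * k.factorial ≤ n^k := by
        calc n.choose k * k.factorial = k.factorial * n.choose k := Nat.mul_comm _ _
          _ = n.descFactorial k := (Nat.descFactorial_eq_factorial_mul_choose n k).symm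
          _ ≤ n^k := Nat.descFactorial_le_pow n k
      exact_mod_cast h2
    have hkfact : ((k:ℝ))^k ≤ (k.factorial:ℝ) * Real.exp ((k:ℝ)-1) :=
      SIC.pow_le_fact_mul_exp k hk1
    have hnkpow : ((n:ℝ)/(k:ℝ))^k = Real.exp ((k:ℝ)*L) := by
      rw [← hexpL, ← Real.exp_nat_mul]
    have hfpos : (0:ℝ) < (k.factorial:ℝ) := by exact_mod_cast k.factorial_pos
    have h7 : (n:ℝ)^k = Real.exp ((k:ℝ)*L) * (k:ℝ)^k := by
      rw [← hnkpow, div_pow]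
      field_simp
    have h9 : ((n.choose k : ℕ):ℝ) ≤ Real.exp ((k:ℝ)*L) * Real.exp ((k:ℝ)-1) := by
      have h8 : ((n.choose k : ℕ):ℝ) * (k.factorial:ℝ)
          ≤ (Real.exp ((k:ℝ)*L) * Real.exp ((k:ℝ)-1)) * (k.factorial:ℝ) := by
        calc ((n.choose k : ℕ):ℝ) * (k.factorial:ℝ) ≤ (n:ℝ)^k := hchoosen
          _ = Real.exp ((k:ℝ)*L) * (k:ℝ)^k := h7
          _ ≤ Real.exp ((k:ℝ)*L) * ((k.factorial:ℝ) * Real.exp ((k:ℝ)-1)) :=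
              mul_le_mul_of_nonneg_left hkfact (Real.exp_pos _).le
          _ = (Real.exp ((k:ℝ)*L) * Real.exp ((k:ℝ)-1)) * (k.factorial:ℝ) := by ring
      exact le_of_mul_le_mul_right h8 hfpos
    have hkCbound : (k:ℝ) * ((n.choose k : ℕ):ℝ) < 5.58^w := by
      have h10 : (k:ℝ) * ((n.choose k : ℕ):ℝ)
          ≤ Real.exp (Real.log (k:ℝ) + (k:ℝ)*L + ((k:ℝ)-1)) := by
        rw [Real.exp_add, Real.exp_add, Real.exp_log hkpos]
        calc (k:ℝ) * ((n.choose k : ℕ):ℝ)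
            ≤ (k:ℝ) * (Real.exp ((k:ℝ)*L) * Real.exp ((k:ℝ)-1)) :=
              mul_le_mul_of_nonneg_left h9 hkpos.le
          _ = (k:ℝ) * Real.exp ((k:ℝ)*L) * Real.exp ((k:ℝ)-1) := by ring
      have h11 : Real.exp (Real.log (k:ℝ) + (k:ℝ)*L + ((k:ℝ)-1)) < Real.exp (1.69*(w:ℝ)) :=
        Real.exp_lt_exp.2 hmain
      have h12 : Real.exp (1.69*(w:ℝ)) = (Real.exp 1.69)^w := by
        rw [mul_comm, Real.exp_nat_mul]
      have h13 : (Real.exp 1.69)^w ≤ 5.58^w := by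
        apply pow_le_pow_left₀ (Real.exp_pos _).le
        linarith [SIC.exp_169_le]
      calc (k:ℝ) * ((n.choose k : ℕ):ℝ)
          ≤ Real.exp (Real.log (k:ℝ) + (k:ℝ)*L + ((k:ℝ)-1)) := h10
        _ < Real.exp (1.69*(w:ℝ)) := h11
        _ = (Real.exp 1.69)^w := h12
        _ ≤ 5.58^w := h13
    -- the key natural-number inequality
    have hfinal : k * n.choose k * (a.choose w) < t'.choose w := by
      have hratio : ((a.choose w : ℕ):ℝ) * ((t':ℝ))^w ≤ ((t'.choose w : ℕ):ℝ) * ((a:ℝ))^w := by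
        have := SIC.choose_ratio a t' hat' w
        have hcast : ((a.choose w * t'^w : ℕ):ℝ) ≤ ((t'.choose w * a^w : ℕ):ℝ) := by
          exact_mod_cast this
        push_cast at hcast
        convert hcast using 2 <;> norm_cast
      have h14 : (k:ℝ) * ((n.choose k : ℕ):ℝ) * ((a:ℝ))^w < ((t':ℝ))^w := by
        calc (k:ℝ) * ((n.choose k : ℕ):ℝ) * ((a:ℝ))^w < 5.58^w * ((a:ℝ))^w :=
              mul_lt_mul_of_pos_right hkCbound (pow_pos hapos w)
          _ = (5.58*(a:ℝ))^w := (mul_pow _ _ _).symm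
          _ ≤ ((t':ℝ))^w := pow_le_pow_left₀ (by positivity) hρ w
      have ht'pos : (0:ℝ) < ((t':ℝ))^w := by
        apply pow_pos
        linarith
      have hR : ((k:ℝ) * ((n.choose k : ℕ):ℝ) * ((a.choose w : ℕ):ℝ)) * ((t':ℝ))^w
          < ((t'.choose w : ℕ):ℝ) * ((t':ℝ))^w := by
        calc ((k:ℝ) * ((n.choose k : ℕ):ℝ) * ((a.choose w : ℕ):ℝ)) * ((t':ℝ))^w
            = ((k:ℝ) * ((n.choose k : ℕ):ℝ)) * (((a.choose w : ℕ):ℝ) * ((t':ℝ))^w) := by ring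
          _ ≤ ((k:ℝ) * ((n.choose k : ℕ):ℝ)) * (((t'.choose w : ℕ):ℝ) * ((a:ℝ))^w) := by
              apply mul_le_mul_of_nonneg_left hratio
              positivity
          _ = ((t'.choose w : ℕ):ℝ) * ((k:ℝ) * ((n.choose k : ℕ):ℝ) * ((a:ℝ))^w) := by ring
          _ < ((t'.choose w : ℕ):ℝ) * ((t':ℝ))^w := by
              apply mul_lt_mul_of_pos_left h14
              exact_mod_cast hchooset'
      have hRR : (k:ℝ) * ((n.choose k : ℕ):ℝ) * ((a.choose w : ℕ):ℝ)
          < ((t'.choose w : ℕ):ℝ) := lt_of_mul_lt_mul_right (by linarith) ht'pos.le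
      exact_mod_cast hRR
    obtain ⟨M, hM⟩ := SIC.exists_code n k w d t' hw1 hk1 (by omega) hfinal
    refine ⟨t' + (w - 1) * d, ⟨M, hM⟩, ?_⟩
    rw [hRHS]
    have hcastlen : ((t' + (w - 1) * d : ℕ):ℝ) = (t':ℝ) + ((w:ℝ) - 1) * (d:ℝ) := by
      push_cast [Nat.cast_sub hw1]
      ring
    rw [hcastlen]
    have hdpos : (0:ℝ) ≤ (d:ℝ) := by linarith
    have hgap : ((w:ℝ) - 1) * (d:ℝ) ≤ ((k:ℝ)*L - 1) * (d:ℝ) :=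
      mul_le_mul_of_nonneg_right (by linarith) hdpos
    linarith [ht'le, hgap]
end

section
/- Let k, n, d, q be positive integers with 2 ≤ k ≤ n and q ≥ 2, and set B_{k,q} = (−log₂(1 − (1 − 1/q)^{k−1}))/(q + d). Then there exists a (k,n,d)-superimposed code of length t with t ≤ ⌈(1/B_{k,q}) · (k·log₂(n/k) + log₂(k·e^k))⌉. -/
section Proofs

open Real

noncomputable def hfun (x : ℝ) : ℝ := -Real.log (1 - Real.exp (-x))

lemma one_sub_exp_neg_pos {x : ℝ} (hx : 0 < x) : 0 < 1 - Real.exp (-x) := by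
  have : Real.exp (-x) < Real.exp 0 := Real.exp_lt_exp.2 (by linarith)
  simpa using by linarith [this, Real.exp_zero]

lemma one_sub_exp_neg_lt_one {x : ℝ} : 1 - Real.exp (-x) < 1 := by
  have := Real.exp_pos (-x); linarith

lemma hfun_nonneg {x : ℝ} (hx : 0 < x) : 0 ≤ hfun x := by
  have h1 := one_sub_exp_neg_pos hx
  have := Real.log_nonpos (by linarith) (le_of_lt one_sub_exp_neg_lt_one)
  simp only [hfun]; linarith

lemma hfun_anti {x y : ℝ} (hx : 0 < x) (hxy : x ≤ y) : hfun y ≤ hfun x := by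
  have h1 := one_sub_exp_neg_pos hx
  have h2 : Real.exp (-y) ≤ Real.exp (-x) := Real.exp_le_exp.2 (by linarith)
  have := Real.log_le_log h1 (by linarith : 1 - Real.exp (-x) ≤ 1 - Real.exp (-y))
  simp only [hfun]; linarith

/-- secant inequality from convexity of exp -/
lemma secant {v u : ℝ} (hv : 0 < v) (hvu : v ≤ u) :
    (v/u) * (1 - Real.exp (-u)) ≤ 1 - Real.exp (-v) := by
  have hu : 0 < u := lt_of_lt_of_le hv hvu
  have hdle : v/u ≤ 1 := (div_le_one hu).2 hvu
  have hcvx := convexOn_exp.2 (Set.mem_univ (0:ℝ)) (Set.mem_univ (-u))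
      (by linarith : (0:ℝ) ≤ 1 - v/u) (by positivity : (0:ℝ) ≤ v/u) (by ring)
  have hval : (1 - v/u) • (0:ℝ) + (v/u) • (-u) = -v := by
    rw [smul_eq_mul, smul_eq_mul, mul_zero, zero_add, div_mul_eq_mul_div, mul_neg, neg_div,
      mul_div_assoc, div_self (ne_of_gt hu), mul_one]
  rw [hval] at hcvx
  simp only [smul_eq_mul, mul_zero, Real.exp_zero] at hcvx
  nlinarith [hcvx]

lemma hfun_le_add_log {v u : ℝ} (hv : 0 < v) (hvu : v ≤ u) :
    hfun v ≤ hfun u + Real.log (u / v) := by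
  have hu : 0 < u := lt_of_lt_of_le hv hvu
  have hAv := one_sub_exp_neg_pos hv
  have hAu := one_sub_exp_neg_pos hu
  have hsec := secant hv hvu
  -- (1 - e^{-u}) * v ≤ (1 - e^{-v}) * u
  have h2 : (1 - Real.exp (-u)) * v ≤ (1 - Real.exp (-v)) * u := by
    have := mul_le_mul_of_nonneg_left hsec (le_of_lt hu)
    calc (1 - Real.exp (-u)) * v = u * ((v/u) * (1 - Real.exp (-u))) := by field_simp
    _ ≤ u * (1 - Real.exp (-v)) := mul_le_mul_of_nonneg_left hsec (le_of_lt hu)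
    _ = (1 - Real.exp (-v)) * u := by ring
  have h3 : (1 - Real.exp (-u)) ≤ (1 - Real.exp (-v)) * (u / v) := by
    rw [← mul_div_assoc, le_div_iff₀ hv]; linarith
  have h4 := Real.log_le_log hAu h3
  rw [Real.log_mul (ne_of_gt hAv) (ne_of_gt (by positivity : (0:ℝ) < u/v))] at h4
  simp only [hfun]; linarith

lemma self_log_le_inv_e {w : ℝ} (hw : 1 ≤ w) : Real.log w ≤ w * (Real.exp 1)⁻¹ := by
  have he : (0:ℝ) < Real.exp 1 := Real.exp_pos 1
  have h0 : 0 < w / Real.exp 1 := by positivity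
  have := Real.log_le_sub_one_of_pos h0
  have hlog : Real.log (w / Real.exp 1) = Real.log w - 1 := by
    rw [Real.log_div (by linarith) (ne_of_gt he), Real.log_exp]
  rw [hlog] at this
  have : Real.log w ≤ w / Real.exp 1 := by linarith
  linarith [this, (div_eq_mul_inv w (Real.exp 1)) ▸ this]

lemma key_lemma {v u : ℝ} (hv : 0 < v) (hvu : v ≤ u) :
    (v/u) * hfun v ≤ hfun u + (Real.exp 1)⁻¹ := by
  have hu : 0 < u := lt_of_lt_of_le hv hvu
  have h1 := hfun_le_add_log hv hvu
  have hratio : v/u ≤ 1 := (div_le_one hu).2 hvu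
  have hratio0 : 0 < v/u := by positivity
  have hnn := hfun_nonneg hu
  have h2 : (v/u) * Real.log (u/v) ≤ (Real.exp 1)⁻¹ := by
    have hw : 1 ≤ u/v := (one_le_div hv).2 hvu
    have := self_log_le_inv_e hw
    have h3 : (v/u) * Real.log (u/v) ≤ (v/u) * ((u/v) * (Real.exp 1)⁻¹) :=
      mul_le_mul_of_nonneg_left this (le_of_lt hratio0)
    have h4 : (v/u) * ((u/v) * (Real.exp 1)⁻¹) = (Real.exp 1)⁻¹ := by
      field_simp
    linarith
  calc (v/u) * hfun v ≤ (v/u) * (hfun u + Real.log (u/v)) :=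
        mul_le_mul_of_nonneg_left h1 (le_of_lt hratio0)
  _ = (v/u) * hfun u + (v/u) * Real.log (u/v) := by ring
  _ ≤ 1 * hfun u + (Real.exp 1)⁻¹ := by
      have := mul_le_mul_of_nonneg_right hratio hnn
      linarith
  _ = hfun u + (Real.exp 1)⁻¹ := by ring

/- p bounds -/
lemma p_pos (B k : ℕ) (hB : 1 ≤ B) (hk : 2 ≤ k) : 0 < 1 - (1 - 1/(B:ℝ))^(k-1) := by
  have hB0 : (0:ℝ) < B := by exact_mod_cast hB
  have h0 : (0:ℝ) ≤ 1 - 1/(B:ℝ) := by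
    have : 1/(B:ℝ) ≤ 1 := by
      rw [div_le_one hB0]; exact_mod_cast hB
    linarith
  have h1 : 1 - 1/(B:ℝ) < 1 := by
    have : 0 < 1/(B:ℝ) := by positivity
    linarith
  have := pow_lt_one₀ h0 h1 (by omega : k - 1 ≠ 0)
  linarith

lemma p_lt_one (B k : ℕ) (hB : 2 ≤ B) : (1 - (1 - 1/(B:ℝ))^(k-1)) < 1 := by
  have hB0 : (0:ℝ) < B := by positivity
  have h0 : (0:ℝ) < 1 - 1/(B:ℝ) := by
    have : 1/(B:ℝ) < 1 := by
      rw [div_lt_one hB0]; exact_mod_cast hB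
    linarith
  have := pow_pos h0 (k-1)
  linarith

lemma Lam_le_hfun (k q : ℕ) (hk : 2 ≤ k) (hq : 2 ≤ q) :
    -Real.log (1 - (1 - 1/(q:ℝ))^(k-1)) ≤ hfun (((k:ℝ)-1)/q) := by
  have hq0 : (0:ℝ) < q := by positivity
  have hs : (1:ℝ) ≤ (k:ℝ)-1 := by
    have : (2:ℝ) ≤ k := by exact_mod_cast hk
    linarith
  have hx : (0:ℝ) < ((k:ℝ)-1)/q := by positivity
  have hbase : 1 - 1/(q:ℝ) ≤ Real.exp (-(1/(q:ℝ))) := by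
    have := Real.add_one_le_exp (-(1/(q:ℝ)))
    linarith
  have hbase0 : (0:ℝ) ≤ 1 - 1/(q:ℝ) := by
    have : 1/(q:ℝ) ≤ 1 := by
      rw [div_le_one hq0]; exact_mod_cast le_trans (by norm_num) hq
    linarith
  have hpow : (1 - 1/(q:ℝ))^(k-1) ≤ Real.exp (-(((k:ℝ)-1)/q)) := by
    calc (1 - 1/(q:ℝ))^(k-1) ≤ (Real.exp (-(1/(q:ℝ))))^(k-1) :=
          pow_le_pow_left₀ hbase0 hbase _
    _ = Real.exp ((k-1 : ℕ) * (-(1/(q:ℝ)))) := by rw [← Real.exp_nat_mul]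
    _ = Real.exp (-(((k:ℝ)-1)/q)) := by
        congr 1
        have : ((k-1 : ℕ):ℝ) = (k:ℝ)-1 := by
          have : (1:ℕ) ≤ k := by omega
          push_cast [Nat.cast_sub this]
          ring
        rw [this]; ring
  have h1 : 0 < 1 - Real.exp (-(((k:ℝ)-1)/q)) := one_sub_exp_neg_pos hx
  have h2 : 1 - Real.exp (-(((k:ℝ)-1)/q)) ≤ 1 - (1 - 1/(q:ℝ))^(k-1) := by linarith
  have := Real.log_le_log h1 h2
  simp only [hfun]; linarith

lemma Lam_ge_hfun (k r : ℕ) (hk : 2 ≤ k) (hr : 2 ≤ r) :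
    hfun (((k:ℝ)-1)/((r:ℝ)-1)) ≤ -Real.log (1 - (1 - 1/(r:ℝ))^(k-1)) := by
  have hr0 : (0:ℝ) < r := by positivity
  have hr1 : (0:ℝ) < (r:ℝ)-1 := by
    have : (2:ℝ) ≤ r := by exact_mod_cast hr
    linarith
  have hs : (1:ℝ) ≤ (k:ℝ)-1 := by
    have : (2:ℝ) ≤ k := by exact_mod_cast hk
    linarith
  have hx : (0:ℝ) < ((k:ℝ)-1)/((r:ℝ)-1) := by positivity
  -- exp(-1/(r-1)) ≤ 1 - 1/r
  have hbase : Real.exp (-(1/((r:ℝ)-1))) ≤ 1 - 1/(r:ℝ) := by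
    have h1 : 1 + 1/((r:ℝ)-1) ≤ Real.exp (1/((r:ℝ)-1)) := by
      have := Real.add_one_le_exp (1/((r:ℝ)-1))
      linarith
    have h2 : Real.exp (-(1/((r:ℝ)-1))) = (Real.exp (1/((r:ℝ)-1)))⁻¹ := by
      rw [← Real.exp_neg]
    rw [h2]
    have h3 : (Real.exp (1/((r:ℝ)-1)))⁻¹ ≤ (1 + 1/((r:ℝ)-1))⁻¹ := by
      apply inv_anti₀ _ h1
      positivity
    have h4 : (1 + 1/((r:ℝ)-1))⁻¹ = 1 - 1/(r:ℝ) := by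
      field_simp
      ring
    linarith
  have hexp0 : (0:ℝ) ≤ Real.exp (-(1/((r:ℝ)-1))) := (Real.exp_pos _).le
  have hpow : Real.exp (-(((k:ℝ)-1)/((r:ℝ)-1))) ≤ (1 - 1/(r:ℝ))^(k-1) := by
    calc Real.exp (-(((k:ℝ)-1)/((r:ℝ)-1)))
        = Real.exp ((k-1:ℕ) * (-(1/((r:ℝ)-1)))) := by
          congr 1
          have : ((k-1 : ℕ):ℝ) = (k:ℝ)-1 := by
            have : (1:ℕ) ≤ k := by omega
            push_cast [Nat.cast_sub this]
            ring
          rw [this]; ring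
    _ = (Real.exp (-(1/((r:ℝ)-1))))^(k-1) := by rw [← Real.exp_nat_mul]
    _ ≤ (1 - 1/(r:ℝ))^(k-1) := pow_le_pow_left₀ hexp0 hbase _
  have hppos : 0 < 1 - (1 - 1/(r:ℝ))^(k-1) := p_pos r k (by omega) hk
  have h2 : 1 - (1 - 1/(r:ℝ))^(k-1) ≤ 1 - Real.exp (-(((k:ℝ)-1)/((r:ℝ)-1))) := by linarith
  have := Real.log_le_log hppos h2
  simp only [hfun]; linarith

lemma Lam_le_log (k q : ℕ) (hk : 2 ≤ k) (hq : 2 ≤ q) :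
    -Real.log (1 - (1 - 1/(q:ℝ))^(k-1)) ≤ Real.log q := by
  have hq0 : (0:ℝ) < q := by positivity
  have hbase0 : (0:ℝ) ≤ 1 - 1/(q:ℝ) := by
    have : 1/(q:ℝ) ≤ 1 := by
      rw [div_le_one hq0]; exact_mod_cast le_trans (by norm_num) hq
    linarith
  have hbase1 : 1 - 1/(q:ℝ) ≤ 1 := by
    have : 0 < 1/(q:ℝ) := by positivity
    linarith
  have hpow : (1 - 1/(q:ℝ))^(k-1) ≤ 1 - 1/(q:ℝ) :=
    pow_le_of_le_one hbase0 hbase1 (by omega)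
  have h1 : 1/(q:ℝ) ≤ 1 - (1 - 1/(q:ℝ))^(k-1) := by linarith
  have h2 := Real.log_le_log (by positivity) h1
  rw [Real.log_div one_ne_zero (ne_of_gt hq0), Real.log_one] at h2
  linarith

lemma hfun_le_log_two_mul (q : ℕ) (hq : 2 ≤ q) (s : ℝ) (hs : 1 ≤ s) :
    hfun (s/(q:ℝ)) ≤ Real.log (2*(q:ℝ)) := by
  have hq0 : (0:ℝ) < q := by positivity
  have h1 : hfun (s/(q:ℝ)) ≤ hfun (1/(q:ℝ)) := by
    apply hfun_anti (by positivity)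
    apply (div_le_div_iff_of_pos_right hq0).2 hs
  have hx0 : (0:ℝ) < 1/(q:ℝ) := by positivity
  have hx1 : 1/(q:ℝ) ≤ 1 := by
    rw [div_le_one hq0]; exact_mod_cast le_trans (by norm_num) hq
  set x : ℝ := 1/(q:ℝ) with hxdef
  have hexpinv : Real.exp (-x) ≤ (1+x)⁻¹ := by
    have h2 : 1 + x ≤ Real.exp x := by
      have := Real.add_one_le_exp x
      linarith
    rw [Real.exp_neg]
    apply inv_anti₀ (by positivity) h2
  have hinvle : (1+x)⁻¹ ≤ 1 - x/2 := by
    rw [inv_le_iff_one_le_mul₀ (by positivity)]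
    nlinarith
  have hlow : x/2 ≤ 1 - Real.exp (-x) := by linarith
  have h3 : hfun x ≤ Real.log (2*(q:ℝ)) := by
    have h4 : (0:ℝ) < x/2 := by positivity
    have h5 := Real.log_le_log h4 hlow
    have h6 : x/2 = (2*(q:ℝ))⁻¹ := by
      rw [hxdef]; field_simp
    rw [h6, Real.log_inv] at h5
    simp only [hfun]
    linarith
  linarith

lemma caseC (k q d r : ℕ) (hk : 2 ≤ k) (hq : 2 ≤ q) (hr : 2 ≤ r) (hrq : r < q)
    (f : ℝ) (hf0 : 0 ≤ f) (hfR : f * ((q:ℝ)+(d:ℝ)) ≤ r) :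
    f * (-Real.log (1 - (1 - 1/(q:ℝ))^(k-1))) ≤
      (-Real.log (1 - (1 - 1/(r:ℝ))^(k-1))) + 3 * (Real.exp 1)⁻¹ := by
  have hq0 : (0:ℝ) < q := by positivity
  have hQ0 : (0:ℝ) < (q:ℝ)+(d:ℝ) := by positivity
  have hqQ : (q:ℝ) ≤ (q:ℝ)+(d:ℝ) := by
    have : (0:ℝ) ≤ d := by positivity
    linarith
  have hs1 : (1:ℝ) ≤ (k:ℝ)-1 := by
    have : (2:ℝ) ≤ k := by exact_mod_cast hk
    linarith
  have hr1 : (1:ℝ) ≤ (r:ℝ)-1 := by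
    have : (2:ℝ) ≤ r := by exact_mod_cast hr
    linarith
  have hrq' : (r:ℝ)-1 ≤ q := by
    have : (r:ℝ) ≤ q := by exact_mod_cast le_of_lt hrq
    linarith
  set s : ℝ := (k:ℝ)-1 with hsdef
  set v : ℝ := s/(q:ℝ) with hvdef
  set u : ℝ := s/((r:ℝ)-1) with hudef
  have hv0 : 0 < v := by rw [hvdef]; positivity
  have hvu : v ≤ u := by
    rw [hvdef, hudef]
    apply div_le_div_of_nonneg_left (by linarith) (by linarith) hrq'
  have hΛ : -Real.log (1 - (1 - 1/(q:ℝ))^(k-1)) ≤ hfun v := Lam_le_hfun k q hk hq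
  have hΛr : hfun u ≤ -Real.log (1 - (1 - 1/(r:ℝ))^(k-1)) := Lam_ge_hfun k r hk hr
  have hΛ0 : 0 ≤ -Real.log (1 - (1 - 1/(q:ℝ))^(k-1)) := by
    have h1 := p_pos q k (by omega) hk
    have h2 := p_lt_one q k hq
    have := Real.log_nonpos (le_of_lt h1) (le_of_lt h2)
    linarith
  have hfv0 : 0 ≤ hfun v := hfun_nonneg hv0
  -- f ≤ r / Q
  have hfle : f ≤ (r:ℝ)/((q:ℝ)+(d:ℝ)) := by
    rw [le_div_iff₀ hQ0]; exact hfR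
  -- step1
  have step1 : f * (-Real.log (1 - (1 - 1/(q:ℝ))^(k-1))) ≤ ((r:ℝ)/((q:ℝ)+(d:ℝ))) * hfun v := by
    calc f * (-Real.log (1 - (1 - 1/(q:ℝ))^(k-1))) ≤ f * hfun v :=
          mul_le_mul_of_nonneg_left hΛ hf0
    _ ≤ ((r:ℝ)/((q:ℝ)+(d:ℝ))) * hfun v := mul_le_mul_of_nonneg_right hfle hfv0
  -- split ratio
  have hsplit : (r:ℝ)/((q:ℝ)+(d:ℝ)) ≤ ((r:ℝ)-1)/(q:ℝ) + 1/((q:ℝ)+(d:ℝ)) := by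
    have h1 : ((r:ℝ)-1)/((q:ℝ)+(d:ℝ)) ≤ ((r:ℝ)-1)/(q:ℝ) :=
      div_le_div_of_nonneg_left (by linarith) hq0 hqQ
    have h2 : (r:ℝ)/((q:ℝ)+(d:ℝ)) = ((r:ℝ)-1)/((q:ℝ)+(d:ℝ)) + 1/((q:ℝ)+(d:ℝ)) := by
      field_simp
      ring
    linarith
  have step2 : ((r:ℝ)/((q:ℝ)+(d:ℝ))) * hfun v ≤
      (((r:ℝ)-1)/(q:ℝ)) * hfun v + (1/((q:ℝ)+(d:ℝ))) * hfun v := by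
    have := mul_le_mul_of_nonneg_right hsplit hfv0
    linarith [this]
  -- key lemma application
  have hvu_ratio : v/u = ((r:ℝ)-1)/(q:ℝ) := by
    rw [hvdef, hudef]
    field_simp
  have step3 : (((r:ℝ)-1)/(q:ℝ)) * hfun v ≤ hfun u + (Real.exp 1)⁻¹ := by
    have := key_lemma hv0 hvu
    rw [hvu_ratio] at this
    exact this
  -- tail term
  have step4 : (1/((q:ℝ)+(d:ℝ))) * hfun v ≤ 2 * (Real.exp 1)⁻¹ := by
    have h1 : hfun v ≤ Real.log (2*(q:ℝ)) := hfun_le_log_two_mul q hq s hs1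
    have h2 : Real.log (2*(q:ℝ)) ≤ (2*(q:ℝ)) * (Real.exp 1)⁻¹ :=
      self_log_le_inv_e (by linarith)
    have h3 : (1/((q:ℝ)+(d:ℝ))) * hfun v ≤ (1/((q:ℝ)+(d:ℝ))) * ((2*(q:ℝ)) * (Real.exp 1)⁻¹) := by
      apply mul_le_mul_of_nonneg_left (le_trans h1 h2) (by positivity)
    have h4 : (1/((q:ℝ)+(d:ℝ))) * ((2*(q:ℝ)) * (Real.exp 1)⁻¹) ≤ 2 * (Real.exp 1)⁻¹ := by
      rw [div_mul_eq_mul_div, one_mul, div_le_iff₀ hQ0]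
      have he : (0:ℝ) < (Real.exp 1)⁻¹ := by positivity
      nlinarith [he, hqQ]
    linarith
  linarith

lemma Gk_ge (k : ℕ) (hk : 2 ≤ k) :
    2 - Real.log 2 ≤ Real.log (k.factorial) - k * Real.log k + k := by
  induction k, hk using Nat.le_induction with
  | base =>
      norm_num [Nat.factorial]
      linarith
  | succ k hk ih =>
      have hk0 : (0:ℝ) < k := by positivity
      have hk10 : (0:ℝ) < (k:ℝ)+1 := by positivity
      have hfact : Real.log ((k+1).factorial) = Real.log ((k:ℝ)+1) + Real.log (k.factorial) := by
        rw [Nat.factorial_succ]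
        push_cast
        rw [Real.log_mul (by positivity) (by positivity)]
      have hlog : Real.log ((k:ℝ)+1) - Real.log k ≤ 1/(k:ℝ) := by
        rw [← Real.log_div (by positivity) (by positivity)]
        have h1 : ((k:ℝ)+1)/k = 1 + 1/k := by field_simp
        rw [h1]
        have := Real.log_le_sub_one_of_pos (show (0:ℝ) < 1 + 1/k by positivity)
        linarith
      have hmul : (k:ℝ) * (Real.log ((k:ℝ)+1) - Real.log k) ≤ 1 := by
        have := mul_le_mul_of_nonneg_left hlog (le_of_lt hk0)
        have h2 : (k:ℝ) * (1/(k:ℝ)) = 1 := by field_simp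
        linarith
      push_cast
      push_cast at ih
      rw [hfact]
      nlinarith [hmul]

lemma three_inv_e_lt : 3 * (Real.exp 1)⁻¹ < 2 - Real.log 2 := by
  have h1 : (2.7182818283:ℝ) < Real.exp 1 := Real.exp_one_gt_d9
  have h2 : Real.log 2 < 0.6931471808 := Real.log_two_lt_d9
  have h3 : (Real.exp 1)⁻¹ < (2.7182818283:ℝ)⁻¹ := by
    apply inv_strictAnti₀ (by norm_num) h1
  nlinarith


open Finset

section Counting
variable {m : ℕ}

/-- count of "good rows": tuples on S avoiding collision with the value at j -/
lemma good_row_count (B : ℕ) (hB : 1 ≤ B) {α : Type*} [Fintype α] [DecidableEq α]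
    (k : ℕ) (hcard : Fintype.card α = k) (j : α) :
    B * (B - 1) ^ (k - 1) ≤ Fintype.card {g : α → Fin B // ∀ j', j' ≠ j → g j' ≠ g j} := by
  classical
  have hBeq : B - 1 + 1 = B := by omega
  -- injection from Fin B × ({x // x ≠ j} → Fin (B-1))
  set emb : Fin B → Fin (B-1) → Fin B := fun v x =>
    Fin.cast hBeq ((Fin.cast hBeq.symm v).succAbove x) with hembdef
  have hemb_ne : ∀ v x, emb v x ≠ v := by
    intro v x h
    have := Fin.succAbove_ne (Fin.cast hBeq.symm v) x
    apply this
    apply Fin.ext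
    have h' := congrArg Fin.val h
    simpa [hembdef] using h'
  have hemb_inj : ∀ v, Function.Injective (emb v) := by
    intro v x y h
    have h' : (Fin.cast hBeq.symm v).succAbove x = (Fin.cast hBeq.symm v).succAbove y := by
      apply Fin.ext
      have := congrArg Fin.val h
      simpa [hembdef] using this
    exact Fin.succAbove_right_injective h'
  set ψ : Fin B × ({x : α // x ≠ j} → Fin (B-1)) → {g : α → Fin B // ∀ j', j' ≠ j → g j' ≠ g j} :=
    fun vh => ⟨fun x => if hx : x = j then vh.1 else emb vh.1 (vh.2 ⟨x, hx⟩), by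
      intro j' hj' heq
      simp only [dif_pos, dif_neg hj'] at heq
      exact hemb_ne _ _ heq⟩ with hψdef
  have hψinj : Function.Injective ψ := by
    intro ⟨v, h⟩ ⟨v', h'⟩ he
    have hfun := congrArg (fun z => z.val) he
    simp only [hψdef] at hfun
    have hv : v = v' := by
      have := congrFun hfun j
      simpa using this
    subst hv
    have hh : h = h' := by
      funext x
      have := congrFun hfun x.1
      simp only [dif_neg x.2] at this
      exact hemb_inj v this
    rw [hh]
  have hle := Fintype.card_le_of_injective ψ hψinj
  have hcard2 : Fintype.card (Fin B × ({x : α // x ≠ j} → Fin (B-1))) = B * (B-1)^(k-1) := by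
    rw [Fintype.card_prod, Fintype.card_fun, Fintype.card_fin, Fintype.card_fin]
    have : Fintype.card {x : α // x ≠ j} = k - 1 := by
      have h1 : Fintype.card {x : α // ¬ x = j} = Fintype.card α - Fintype.card {x : α // x = j} :=
        Fintype.card_subtype_compl _
      rw [Fintype.card_subtype_eq] at h1
      simpa [hcard] using h1
    rw [this]
  exact hcard2 ▸ hle
end Counting

section Counting2

lemma bad_row_count (B k : ℕ) (hB : 1 ≤ B) {α : Type*} [Fintype α] [DecidableEq α]
    (hcard : Fintype.card α = k) (j : α) :
    Fintype.card {g : α → Fin B // ∃ j', j' ≠ j ∧ g j' = g j} ≤ B ^ k - B * (B - 1) ^ (k - 1) := by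
  classical
  have h1 : Fintype.card {g : α → Fin B // ¬ ∃ j', j' ≠ j ∧ g j' = g j}
      = Fintype.card (α → Fin B) - Fintype.card {g : α → Fin B // ∃ j', j' ≠ j ∧ g j' = g j} :=
    Fintype.card_subtype_compl _
  have h2 : Fintype.card {g : α → Fin B // ¬ ∃ j', j' ≠ j ∧ g j' = g j}
      = Fintype.card {g : α → Fin B // ∀ j', j' ≠ j → g j' ≠ g j} := by
    apply Fintype.card_congr
    apply Equiv.subtypeEquivRight
    intro g
    push_neg
    rfl
  have h3 := good_row_count B hB k hcard j
  have h4 : Fintype.card (α → Fin B) = B ^ k := by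
    rw [Fintype.card_fun, Fintype.card_fin, hcard]
  have h5 : Fintype.card {g : α → Fin B // ∃ j', j' ≠ j ∧ g j' = g j}
      ≤ Fintype.card (α → Fin B) := Fintype.card_subtype_le _
  generalize hP : Fintype.card {g : α → Fin B // ∃ j', j' ≠ j ∧ g j' = g j} = P at h1 h5 ⊢
  generalize hG : Fintype.card {g : α → Fin B // ∀ j', j' ≠ j → g j' ≠ g j} = G at h2 h3
  generalize hN : Fintype.card {g : α → Fin B // ¬ ∃ j', j' ≠ j ∧ g j' = g j} = N at h1 h2
  rw [h4] at h1 h5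
  generalize hBK : B ^ k = BK at h1 h5 ⊢
  generalize hW : B * (B - 1) ^ (k - 1) = W at h3 ⊢
  clear * - h1 h2 h3 h5
  omega

lemma bad_pair_count (n m k : ℕ) (A : Fin m → ℕ) (S : Finset (Fin n)) (hS : S.card = k)
    (j : Fin n) (hj : j ∈ S) :
    Fintype.card {c : Fin n → (∀ i, Fin (A i)) // ∀ i, ∃ j' ∈ S, j' ≠ j ∧ c j' i = c j i}
      ≤ (∏ i, (A i ^ k - A i * (A i - 1) ^ (k - 1))) * (∏ i, A i) ^ (n - k) := by
  classical
  set jj : {x : Fin n // x ∈ S} := ⟨j, hj⟩ with hjj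
  have hΦ : ∃ Φ : {c : Fin n → (∀ i, Fin (A i)) // ∀ i, ∃ j' ∈ S, j' ≠ j ∧ c j' i = c j i} →
      (∀ i, {g : {x : Fin n // x ∈ S} → Fin (A i) // ∃ j', j' ≠ jj ∧ g j' = g jj}) ×
      ({x : Fin n // x ∉ S} → ∀ i, Fin (A i)),
      Function.Injective Φ := by
    refine ⟨fun c => ⟨fun i => ⟨fun xS => c.1 xS.1 i, ?_⟩, fun xc => c.1 xc.1⟩, ?_⟩
    · obtain ⟨j', hj'S, hj'ne, hj'eq⟩ := c.2 i
      exact ⟨⟨j', hj'S⟩, by simp [hjj, Subtype.ext_iff, hj'ne], hj'eq⟩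
    · intro c c' he
      apply Subtype.ext
      funext j0
      by_cases hj0 : j0 ∈ S
      · funext i
        have h1 := congrFun (congrArg Prod.fst he) i
        have h2 := congrArg Subtype.val h1
        exact congrFun h2 ⟨j0, hj0⟩
      · have h1 := congrArg Prod.snd he
        exact congrFun h1 ⟨j0, hj0⟩
  obtain ⟨Φ, hΦinj⟩ := hΦ
  have hle := Fintype.card_le_of_injective Φ hΦinj
  have hcardS : Fintype.card {x : Fin n // x ∈ S} = k := by
    simpa [Fintype.card_coe] using hS
  have hcardSc : Fintype.card {x : Fin n // x ∉ S} = n - k := by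
    have h1 : Fintype.card {x : Fin n // ¬ x ∈ S} =
        Fintype.card (Fin n) - Fintype.card {x : Fin n // x ∈ S} := Fintype.card_subtype_compl _
    rw [hcardS, Fintype.card_fin] at h1
    exact h1
  have hTgtcard : Fintype.card ((∀ i, {g : {x : Fin n // x ∈ S} → Fin (A i) // ∃ j', j' ≠ jj ∧ g j' = g jj}) ×
      ({x : Fin n // x ∉ S} → ∀ i, Fin (A i))) ≤
      (∏ i, (A i ^ k - A i * (A i - 1) ^ (k - 1))) * (∏ i, A i) ^ (n - k) := by
    rw [Fintype.card_prod, Fintype.card_pi, Fintype.card_fun, Fintype.card_pi, hcardSc]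
    simp only [Fintype.card_fin]
    apply Nat.mul_le_mul_right
    apply Finset.prod_le_prod'
    intro i _
    by_cases hBi : 1 ≤ A i
    · exact bad_row_count (A i) k hBi hcardS jj
    · have hemp : IsEmpty {g : {x : Fin n // x ∈ S} → Fin (A i) // ∃ j', j' ≠ jj ∧ g j' = g jj} := by
        constructor; rintro ⟨g, -⟩; exact absurd (g jj).isLt (by omega)
      rw [Fintype.card_eq_zero]
      exact Nat.zero_le _
  exact le_trans hle hTgtcard

end Counting2

lemma exists_good_code (n m k : ℕ) (hkn : k ≤ n) (A : Fin m → ℕ) (hA : ∀ i, 1 ≤ A i)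
    (hcount : n.choose k * k * ∏ i, (A i ^ k - A i * (A i - 1) ^ (k - 1)) < ∏ i, A i ^ k) :
    ∃ c : Fin n → (∀ i, Fin (A i)), ∀ S : Finset (Fin n), S.card = k → ∀ j ∈ S,
      ∃ i, ∀ j' ∈ S, j' ≠ j → c j' i ≠ c j i := by
  classical
  by_contra hcon
  push_neg at hcon
  -- every code is bad
  have hbad : ∀ c : Fin n → (∀ i, Fin (A i)), ∃ S : Finset (Fin n), S.card = k ∧
      ∃ j ∈ S, ∀ i, ∃ j' ∈ S, j' ≠ j ∧ c j' i = c j i := by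
    intro c
    obtain ⟨S, hScard, j, hjS, hj⟩ := hcon c
    refine ⟨S, hScard, j, hjS, ?_⟩
    intro i
    obtain ⟨j', hj'S, hj'ne, hj'eq⟩ := hj i
    exact ⟨j', hj'S, hj'ne, hj'eq⟩
  set W := ∏ i, A i with hW
  have hW1 : 1 ≤ W := Finset.one_le_prod' (fun i _ => hA i)
  clear_value W
  set Bnd := (∏ i, (A i ^ k - A i * (A i - 1) ^ (k - 1))) * W ^ (n - k) with hBnd
  clear_value Bnd
  -- union bound
  have hsub : (Finset.univ : Finset (Fin n → ∀ i, Fin (A i))) ⊆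
      (Finset.univ.powersetCard k).biUnion (fun S => S.biUnion (fun j =>
        Finset.univ.filter (fun c => ∀ i, ∃ j' ∈ S, j' ≠ j ∧ c j' i = c j i))) := by
    intro c _
    obtain ⟨S, hScard, j, hjS, hj⟩ := hbad c
    rw [Finset.mem_biUnion]
    refine ⟨S, ?_, ?_⟩
    · rw [Finset.mem_powersetCard]
      exact ⟨Finset.subset_univ _, hScard⟩
    rw [Finset.mem_biUnion]
    exact ⟨j, hjS, Finset.mem_filter.2 ⟨Finset.mem_univ _, hj⟩⟩
  have hcard1 : (Finset.univ : Finset (Fin n → ∀ i, Fin (A i))).card ≤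
      ∑ S ∈ Finset.univ.powersetCard k, ∑ j ∈ S,
        (Finset.univ.filter (fun c : Fin n → (∀ i, Fin (A i)) =>
          ∀ i, ∃ j' ∈ S, j' ≠ j ∧ c j' i = c j i)).card := by
    refine le_trans (Finset.card_le_card hsub) ?_
    refine le_trans (Finset.card_biUnion_le) ?_
    apply Finset.sum_le_sum
    intro S _
    exact Finset.card_biUnion_le
  have hpair : ∀ S : Finset (Fin n), S.card = k → ∀ j ∈ S,
      (Finset.univ.filter (fun c : Fin n → (∀ i, Fin (A i)) =>
        ∀ i, ∃ j' ∈ S, j' ≠ j ∧ c j' i = c j i)).card ≤ Bnd := by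
    intro S hS j hj
    rw [← Fintype.card_subtype, hBnd, hW]
    exact bad_pair_count n m k A S hS j hj
  have hcard2 : ∑ S ∈ Finset.univ.powersetCard k, ∑ j ∈ S,
        (Finset.univ.filter (fun c : Fin n → (∀ i, Fin (A i)) =>
          ∀ i, ∃ j' ∈ S, j' ≠ j ∧ c j' i = c j i)).card ≤ n.choose k * (k * Bnd) := by
    have h1 : ∀ S ∈ Finset.univ.powersetCard k, ∑ j ∈ S,
        (Finset.univ.filter (fun c : Fin n → (∀ i, Fin (A i)) =>
          ∀ i, ∃ j' ∈ S, j' ≠ j ∧ c j' i = c j i)).card ≤ k * Bnd := by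
      intro S hSmem
      obtain ⟨-, hScard⟩ := Finset.mem_powersetCard.1 hSmem
      calc ∑ j ∈ S, (Finset.univ.filter (fun c : Fin n → (∀ i, Fin (A i)) =>
            ∀ i, ∃ j' ∈ S, j' ≠ j ∧ c j' i = c j i)).card
          ≤ ∑ _j ∈ S, Bnd := Finset.sum_le_sum (fun j hj => hpair S hScard j hj)
        _ = k * Bnd := by rw [Finset.sum_const, hScard, smul_eq_mul]
    calc ∑ S ∈ Finset.univ.powersetCard k, ∑ j ∈ S,
          (Finset.univ.filter (fun c : Fin n → (∀ i, Fin (A i)) =>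
            ∀ i, ∃ j' ∈ S, j' ≠ j ∧ c j' i = c j i)).card
        ≤ ∑ _S ∈ Finset.univ.powersetCard k, k * Bnd := Finset.sum_le_sum h1
      _ = (Finset.univ.powersetCard k).card * (k * Bnd) := by
          rw [Finset.sum_const, smul_eq_mul]
      _ = n.choose k * (k * Bnd) := by
          rw [Finset.card_powersetCard, Finset.card_univ, Fintype.card_fin]
  have hOmega : (Finset.univ : Finset (Fin n → ∀ i, Fin (A i))).card = W ^ n := by
    rw [Finset.card_univ, Fintype.card_pi]
    have : ∀ j : Fin n, Fintype.card (∀ i, Fin (A i)) = W := by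
      intro j
      rw [Fintype.card_pi]
      simp [hW]
    rw [Finset.prod_congr rfl (fun j _ => this j), Finset.prod_const, Finset.card_univ,
      Fintype.card_fin]
  -- final arithmetic
  have hfin : n.choose k * (k * Bnd) < W ^ n := by
    have h2 : n.choose k * k * ∏ i, (A i ^ k - A i * (A i - 1) ^ (k - 1)) < W ^ k := by
      rw [hW, ← Finset.prod_pow]
      exact hcount
    have h3 : (n.choose k * k * ∏ i, (A i ^ k - A i * (A i - 1) ^ (k - 1))) * W ^ (n - k)
        < W ^ k * W ^ (n - k) := by
      apply Nat.mul_lt_mul_of_lt_of_le h2 (le_refl _)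
      exact pow_pos hW1 _
    have h4 : W ^ k * W ^ (n - k) ≤ W ^ n := by
      rw [← pow_add, Nat.add_sub_cancel' hkn]
    calc n.choose k * (k * Bnd)
        = (n.choose k * k * ∏ i, (A i ^ k - A i * (A i - 1) ^ (k - 1))) * W ^ (n - k) := by
          rw [hBnd]; ring
      _ < W ^ k * W ^ (n - k) := h3
      _ ≤ W ^ n := h4
  have := lt_of_le_of_lt (le_trans hcard1 hcard2) hfin
  rw [hOmega] at this
  exact lt_irrefl _ this

lemma build_code (k n d q a r : ℕ) (hd : 0 < d) (hr1 : 1 ≤ r) (hrq : r ≤ q)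
    (c : Fin n → ∀ i : Fin (a+1), Fin (if (i:ℕ) < a then q else r))
    (hc : ∀ S : Finset (Fin n), S.card = k → ∀ j ∈ S,
      ∃ i, ∀ j' ∈ S, j' ≠ j → c j' i ≠ c j i) :
    ∃ M : Fin (a*(q+d)+r) → Fin n → Bool, IsSuperimposedCode k n d (a*(q+d)+r) M := by
  set Q := q + d with hQdef
  have hQ : 0 < Q := by omega
  clear_value Q
  have hvq : ∀ (j : Fin n) (i : Fin (a+1)), (c j i : ℕ) < q := by
    intro j i
    have := (c j i).isLt
    split at this <;> omega
  have pf : ∀ x : Fin (a*Q+r), (x:ℕ)/Q < a + 1 := by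
    intro x
    rw [Nat.div_lt_iff_lt_mul hQ]
    have h0 : (x:ℕ) < a*Q + r := x.isLt
    have h1 : (a+1)*Q = a*Q + Q := by ring
    have h2 : a*Q + r ≤ a*Q + Q := Nat.add_le_add_left (by omega) _
    calc (x:ℕ) < a*Q + r := h0
    _ ≤ a*Q + Q := h2
    _ = (a+1)*Q := h1.symm
  refine ⟨fun x j => decide ((c j ⟨(x:ℕ)/Q, pf x⟩ : ℕ) = (x:ℕ) % Q), ?_, ?_⟩
  · -- run constraint
    intro j x x' hlt h1 h2
    rw [decide_eq_true_eq] at h1 h2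
    have hble : (x:ℕ)/Q ≤ (x':ℕ)/Q := Nat.div_le_div_right (le_of_lt hlt)
    have hbne : (x:ℕ)/Q ≠ (x':ℕ)/Q := by
      intro he
      have : (⟨(x:ℕ)/Q, pf x⟩ : Fin (a+1)) = ⟨(x':ℕ)/Q, pf x'⟩ := Fin.ext he
      rw [this] at h1
      have hxx : (x:ℕ) % Q = (x':ℕ) % Q := by rw [← h1]; exact h2
      have : (x:ℕ) = (x':ℕ) := by
        have e1 := Nat.div_add_mod (x:ℕ) Q
        have e2 := Nat.div_add_mod (x':ℕ) Q
        rw [he] at e1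
        linarith
      exact absurd (Fin.ext this) (ne_of_lt hlt)
    have hblt : (x:ℕ)/Q < (x':ℕ)/Q := lt_of_le_of_ne hble hbne
    have hm1 : (x:ℕ) % Q < q := h1 ▸ hvq j _
    have e1 := Nat.div_add_mod (x:ℕ) Q
    have e2 := Nat.div_add_mod (x':ℕ) Q
    have hstep : Q * ((x:ℕ)/Q) + Q ≤ Q * ((x':ℕ)/Q) := by
      have h3 : (x:ℕ)/Q + 1 ≤ (x':ℕ)/Q := hblt
      have h4 := Nat.mul_le_mul_left Q h3
      have h5 : Q * ((x:ℕ)/Q + 1) = Q * ((x:ℕ)/Q) + Q := by ring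
      linarith
    have hm2 : (x':ℕ) % Q ≥ 0 := Nat.zero_le _
    linarith
  · -- separation
    intro S hS j hj
    obtain ⟨i, hi⟩ := hc S hS j hj
    have hvlt : (c j i : ℕ) < Q := lt_of_lt_of_le (hvq j i) (by omega)
    have hxlt : (i:ℕ)*Q + (c j i : ℕ) < a*Q+r := by
      have hisLt := (c j i).isLt
      by_cases hcase : (i:ℕ) < a
      · have hval : (c j i : ℕ) < q := hvq j i
        have hmul : (i:ℕ)*Q ≤ (a-1)*Q := Nat.mul_le_mul_right _ (by omega)
        have haa : a - 1 + 1 = a := by omega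
        have h2 : (a-1)*Q + Q = a * Q := by
          calc (a-1)*Q + Q = ((a-1)+1)*Q := by ring
          _ = a * Q := by rw [haa]
        linarith
      · have hia : (i:ℕ) = a := by have := i.isLt; omega
        have hval : (c j i : ℕ) < r := by
          have := (c j i).isLt
          split at this
          · omega
          · exact this
        have hmul : (i:ℕ)*Q = a*Q := by rw [hia]
        linarith
    have hdm : ∀ (x : Fin (a*Q+r)) (i : Fin (a+1)) (v : ℕ), v < Q →
        (x:ℕ) = (i:ℕ)*Q + v → (⟨(x:ℕ)/Q, pf x⟩ : Fin (a+1)) = i ∧ (x:ℕ) % Q = v := by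
      intro x i v hv hx
      have hdiv : (x:ℕ) / Q = (i:ℕ) := by
        rw [hx, Nat.mul_comm (i:ℕ) Q, Nat.mul_add_div hQ, Nat.div_eq_of_lt hv, Nat.add_zero]
      have hmod : (x:ℕ) % Q = v := by
        rw [hx, Nat.mul_comm (i:ℕ) Q, Nat.mul_add_mod, Nat.mod_eq_of_lt hv]
      exact ⟨Fin.ext hdiv, hmod⟩
    obtain ⟨hfin, hmod⟩ := hdm ⟨(i:ℕ)*Q + (c j i : ℕ), hxlt⟩ i (c j i : ℕ) hvlt rfl
    refine ⟨⟨(i:ℕ)*Q + (c j i : ℕ), hxlt⟩, ?_, ?_⟩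
    · rw [decide_eq_true_eq, hfin, hmod]
    · intro j' hj' hne
      rw [decide_eq_false_iff_not, hfin, hmod]
      intro heq
      exact hi j' hj' hne (Fin.ext heq)


lemma master (k n d q : ℕ) (hk : 2 ≤ k) (hkn : k ≤ n) (hd : 0 < d) (hq : 2 ≤ q) :
    ∃ a r : ℕ, 1 ≤ r ∧ r ≤ q ∧
      (((a*(q+d)+r : ℕ) : ℤ) ≤
        ⌈(1 / ((-(Real.logb 2 (1 - (1 - 1 / (q : ℝ)) ^ (k - 1)))) / ((q : ℝ) + (d : ℝ)))) *
          ((k : ℝ) * Real.logb 2 ((n : ℝ) / (k : ℝ)) + Real.logb 2 ((k : ℝ) * Real.exp k))⌉) ∧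
      ((k:ℝ) * (n.choose k) * (1 - (1 - 1/(q:ℝ))^(k-1))^a * (1 - (1 - 1/(r:ℝ))^(k-1)) < 1) := by
  have hk0 : (0:ℝ) < k := by positivity
  have hn0 : (0:ℝ) < n := by
    have : (0:ℕ) < n := by omega
    exact_mod_cast this
  have hq0 : (0:ℝ) < q := by positivity
  have hQ0 : (0:ℝ) < (q:ℝ)+(d:ℝ) := by positivity
  set p : ℝ := 1 - (1 - 1/(q:ℝ))^(k-1) with hpdef
  have hp0 : 0 < p := p_pos q k (by omega) hk
  have hp1 : p < 1 := p_lt_one q k hq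
  set Λ : ℝ := -Real.log p with hLdef
  have hΛ0 : 0 < Λ := by
    have := Real.log_neg hp0 hp1
    rw [hLdef]; linarith
  set X2 : ℝ := k * Real.log ((n:ℝ)/k) + Real.log ((k:ℝ) * Real.exp k) with hX2def
  have hX2pos : 0 < X2 := by
    have h1 : (0:ℝ) ≤ Real.log ((n:ℝ)/k) := by
      apply Real.log_nonneg
      rw [le_div_iff₀ hk0]
      have : (k:ℝ) ≤ n := by exact_mod_cast hkn
      linarith
    have h2 : 0 < Real.log ((k:ℝ) * Real.exp k) := by
      apply Real.log_pos
      have he : (1:ℝ) ≤ Real.exp k := by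
        rw [← Real.exp_zero]
        apply Real.exp_le_exp.2
        positivity
      have hk2 : (2:ℝ) ≤ k := by exact_mod_cast hk
      nlinarith
    rw [hX2def]
    have h3 : (0:ℝ) ≤ (k:ℝ) * Real.log ((n:ℝ)/k) := by positivity
    linarith
  set y : ℝ := X2/Λ with hydef
  have hy0 : 0 < y := div_pos hX2pos hΛ0
  have hX2eq : X2 = y * Λ := by
    rw [hydef]; field_simp
  -- rewrite the ceiling expression
  have hexpr : (1 / ((-(Real.logb 2 p)) / ((q : ℝ) + (d : ℝ)))) *
      ((k : ℝ) * Real.logb 2 ((n : ℝ) / (k : ℝ)) + Real.logb 2 ((k : ℝ) * Real.exp k)) =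
      ((q:ℝ)+(d:ℝ)) * y := by
    have hl2 : (0:ℝ) < Real.log 2 := Real.log_pos (by norm_num)
    have hlp : Real.log p ≠ 0 := by
      have := Real.log_neg hp0 hp1
      linarith
    rw [hydef, hX2def, hLdef]
    simp only [Real.logb]
    field_simp
  rw [hexpr]
  set T : ℤ := ⌈((q:ℝ)+(d:ℝ)) * y⌉ with hTdef
  have hTge : ((q:ℝ)+(d:ℝ))*y ≤ (T:ℝ) := Int.le_ceil _
  have hT1 : 1 ≤ T := by
    have h0 : (0:ℝ) < ((q:ℝ)+(d:ℝ))*y := by positivity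
    exact Int.ceil_pos.2 h0
  set a : ℕ := ⌊y⌋₊ with hadef
  have hay : (a:ℝ) ≤ y := Nat.floor_le hy0.le
  have hya : y < a+1 := Nat.lt_floor_add_one y
  have haQT : (((q+d)*a : ℕ) : ℤ) ≤ T := by
    have h1 : (((q+d)*a : ℕ) : ℝ) ≤ ((q:ℝ)+(d:ℝ))*y := by
      push_cast
      exact mul_le_mul_of_nonneg_left hay (le_of_lt hQ0)
    have h2 : (((q+d)*a : ℕ) : ℝ) ≤ ((T:ℤ):ℝ) := le_trans h1 hTge
    exact_mod_cast h2
  set Tn : ℕ := T.toNat with hTndef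
  have hTnT : (Tn:ℤ) = T := Int.toNat_of_nonneg (by omega)
  have haTn : (q+d)*a ≤ Tn := by omega
  have hTnreal : ((q:ℝ)+(d:ℝ))*y ≤ (Tn:ℝ) := by
    have h1 : ((Tn:ℤ):ℝ) = (T:ℝ) := by exact_mod_cast hTnT
    rw [show ((Tn:ℕ):ℝ) = ((Tn:ℤ):ℝ) by push_cast; ring, h1]
    exact hTge
  set R : ℕ := Tn - (q+d)*a with hRdef
  clear_value p Λ X2 y T a Tn R
  have hTnsplit : Tn = (q+d)*a + R := by omega
  have lengthOK : ∀ w : ℕ, w ≤ Tn → ((w:ℕ):ℤ) ≤ T := by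
    intro w hw; omega
  -- bound on log (k * choose)
  have hC1 : (1:ℝ) ≤ (n.choose k : ℝ) := by
    exact_mod_cast Nat.choose_pos hkn
  have hfact0 : (0:ℝ) < (k.factorial : ℝ) := by
    exact_mod_cast k.factorial_pos
  have hlogkC : Real.log ((k:ℝ)*(n.choose k)) ≤ X2 - (2 - Real.log 2) := by
    have hCle : (n.choose k : ℝ) ≤ ((n:ℝ) ^ k) / (k.factorial : ℝ) := by
      have := Nat.choose_le_pow_div (α := ℝ) k n
      push_cast at this ⊢
      exact this
    have h1 : Real.log ((k:ℝ)*(n.choose k)) = Real.log k + Real.log (n.choose k) :=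
      Real.log_mul (ne_of_gt hk0) (by linarith)
    have h2 : Real.log (n.choose k : ℝ) ≤ Real.log (((n:ℝ)^k) / k.factorial) :=
      Real.log_le_log (by linarith) hCle
    have h3 : Real.log (((n:ℝ)^k) / k.factorial) = k * Real.log n - Real.log (k.factorial) := by
      rw [Real.log_div (by positivity) (ne_of_gt hfact0), Real.log_pow]
    have h4 : Real.log ((n:ℝ)/k) = Real.log n - Real.log k :=
      Real.log_div (ne_of_gt hn0) (ne_of_gt hk0)
    have h5 : Real.log ((k:ℝ) * Real.exp k) = Real.log k + k :=
      by rw [Real.log_mul (ne_of_gt hk0) (ne_of_gt (Real.exp_pos _)), Real.log_exp]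
    have h6 := Gk_ge k hk
    rw [hX2def, h4, h5]
    linarith [h1, h2, h3, h6]
  have hnum := three_inv_e_lt
  have hlog2lt : Real.log 2 < 1 := by
    have := Real.log_two_lt_d9
    linarith
  -- finisher
  have finisher : ∀ (a' r : ℕ), 1 ≤ r →
      Real.log ((k:ℝ)*(n.choose k)) < a' * Λ + (-Real.log (1 - (1 - 1/(r:ℝ))^(k-1))) →
      (k:ℝ) * (n.choose k) * p^a' * (1 - (1 - 1/(r:ℝ))^(k-1)) < 1 := by
    intro a' r hr1 hlt
    have hpr0 : 0 < 1 - (1 - 1/(r:ℝ))^(k-1) := p_pos r k hr1 hk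
    have hkC0 : (0:ℝ) < (k:ℝ)*(n.choose k) := by positivity
    have hx0 : (0:ℝ) < (k:ℝ)*(n.choose k) * p^a' * (1 - (1 - 1/(r:ℝ))^(k-1)) := by positivity
    have hlogx : Real.log ((k:ℝ)*(n.choose k) * p^a' * (1 - (1 - 1/(r:ℝ))^(k-1))) =
        Real.log ((k:ℝ)*(n.choose k)) + a' * Real.log p + Real.log (1 - (1 - 1/(r:ℝ))^(k-1)) := by
      rw [Real.log_mul (by positivity) (ne_of_gt hpr0), Real.log_mul (ne_of_gt hkC0)
        (by positivity), Real.log_pow]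
    have hneg : Real.log ((k:ℝ)*(n.choose k) * p^a' * (1 - (1 - 1/(r:ℝ))^(k-1))) < 0 := by
      rw [hlogx]
      rw [hLdef] at hlt
      linarith
    calc (k:ℝ)*(n.choose k) * p^a' * (1 - (1 - 1/(r:ℝ))^(k-1))
        = Real.exp (Real.log ((k:ℝ)*(n.choose k) * p^a' * (1 - (1 - 1/(r:ℝ))^(k-1)))) :=
          (Real.exp_log hx0).symm
      _ < Real.exp 0 := Real.exp_lt_exp.2 hneg
      _ = 1 := Real.exp_zero
  rcases Nat.eq_zero_or_pos R with hR0 | hRpos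
  · -- R = 0
    have hTneq : Tn = (q+d)*a := by omega
    have ha1 : 1 ≤ a := by
      by_contra hcon
      have : a = 0 := by omega
      rw [this, Nat.mul_zero] at hTneq
      omega
    have hyLEa : y ≤ (a:ℝ) := by
      have h1 : (Tn:ℝ) = ((q:ℝ)+(d:ℝ))*(a:ℝ) := by
        rw [hTneq]; push_cast; ring
      have h2 : ((q:ℝ)+(d:ℝ))*y ≤ ((q:ℝ)+(d:ℝ))*(a:ℝ) := by
        rw [← h1]; exact hTnreal
      exact le_of_mul_le_mul_left h2 hQ0
    refine ⟨a - 1, q, by omega, le_refl q, ?_, ?_⟩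
    · apply lengthOK
      have h2 : a - 1 + 1 = a := by omega
      have h3 : (a-1)*(q+d) + (q+d) = a*(q+d) := by
        calc (a-1)*(q+d) + (q+d) = ((a-1)+1)*(q+d) := by ring
        _ = a*(q+d) := by rw [h2]
      have h4 : a*(q+d) = (q+d)*a := Nat.mul_comm _ _
      have h5 : Tn = (q+d)*a := hTneq
      linarith
    · apply finisher (a-1) q (by omega)
      have h5 : ((a-1:ℕ):ℝ) = (a:ℝ)-1 := by
        have h6 : (1:ℕ) ≤ a := ha1
        push_cast [Nat.cast_sub h6]
        ring
      have h7 : X2 ≤ (a:ℝ)*Λ := by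
        rw [hX2eq]
        exact mul_le_mul_of_nonneg_right hyLEa (le_of_lt hΛ0)
      rw [h5]
      have hΛq : -Real.log (1 - (1 - 1/(q:ℝ))^(k-1)) = Λ := by rw [hLdef, hpdef]
      rw [hΛq]
      linarith
  · -- R ≥ 1
    have hfR : (y - a) * ((q:ℝ)+(d:ℝ)) ≤ (R:ℝ) := by
      have h2 : (Tn:ℝ) = ((q:ℝ)+(d:ℝ))*(a:ℝ) + (R:ℝ) := by
        rw [hTnsplit]; push_cast; ring
      linarith [hTnreal, h2]
    have hf0 : (0:ℝ) ≤ y - a := by linarith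
    rcases lt_or_ge R q with hRq | hqR
    · rcases (by omega : R = 1 ∨ 2 ≤ R) with hR1 | hR2
      · -- r = 1
        refine ⟨a, R, hRpos, le_of_lt hRq, ?_, ?_⟩
        · apply lengthOK
          have h4 : a*(q+d) = (q+d)*a := Nat.mul_comm _ _
          linarith [hTnsplit]
        · apply finisher a R hRpos
          rw [hR1]
          have hone : (1 - (1 - 1/((1:ℕ):ℝ))^(k-1)) = 1 := by
            have h0 : (1 : ℝ) - 1/((1:ℕ):ℝ) = 0 := by norm_num
            rw [h0, zero_pow (show k-1 ≠ 0 by omega), sub_zero]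
          rw [hone, Real.log_one, neg_zero, add_zero]
          -- f * Λ < 1
          have hfle : y - a ≤ 1/((q:ℝ)+(d:ℝ)) := by
            rw [le_div_iff₀ hQ0]
            rw [hR1] at hfR
            exact_mod_cast hfR
          have hΛlog : Λ ≤ Real.log q := by
            rw [hLdef, hpdef]; exact Lam_le_log k q hk hq
          have hlogq : Real.log q ≤ (q:ℝ) - 1 := Real.log_le_sub_one_of_pos hq0
          have hfΛ : (y - a)*Λ < 1 := by
            have h1 : (y-a)*Λ ≤ (1/((q:ℝ)+(d:ℝ)))*Λ :=
              mul_le_mul_of_nonneg_right hfle (le_of_lt hΛ0)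
            have h2 : (1/((q:ℝ)+(d:ℝ)))*Λ < 1 := by
              rw [div_mul_eq_mul_div, one_mul, div_lt_one hQ0]
              have hd1 : (1:ℝ) ≤ (d:ℝ) := by exact_mod_cast hd
              linarith
            linarith
          have hX2a : X2 = (a:ℝ)*Λ + (y-a)*Λ := by
            rw [hX2eq]; ring
          linarith
      · -- 2 ≤ R < q
        refine ⟨a, R, by omega, le_of_lt hRq, ?_, ?_⟩
        · apply lengthOK
          have h4 : a*(q+d) = (q+d)*a := Nat.mul_comm _ _
          linarith [hTnsplit]
        · apply finisher a R (by omega)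
          have hcc := caseC k q d R hk hq hR2 hRq (y - a) hf0 hfR
          have hΛq : -Real.log (1 - (1 - 1/(q:ℝ))^(k-1)) = Λ := by rw [hLdef, hpdef]
          rw [hΛq] at hcc
          have hX2a : X2 = (a:ℝ)*Λ + (y-a)*Λ := by
            rw [hX2eq]; ring
          linarith
    · -- R ≥ q : r = q
      refine ⟨a, q, by omega, le_refl q, ?_, ?_⟩
      · apply lengthOK
        have h4 : a*(q+d) = (q+d)*a := Nat.mul_comm _ _
        have := hTnsplit
        linarith [hqR]
      · apply finisher a q (by omega)
        have hΛq : -Real.log (1 - (1 - 1/(q:ℝ))^(k-1)) = Λ := by rw [hLdef, hpdef]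
        rw [hΛq]
        have hX2lt : X2 < ((a:ℝ)+1)*Λ := by
          rw [hX2eq]
          exact mul_lt_mul_of_pos_right hya hΛ0
        have hexpand : ((a:ℝ)+1)*Λ = (a:ℝ)*Λ + Λ := by ring
        linarith [hlogkC, hX2lt, hlog2lt, hexpand]


lemma badrow_cast (B k : ℕ) (hB : 1 ≤ B) (hk : 2 ≤ k) :
    ((B^k - B*(B-1)^(k-1) : ℕ) : ℝ) = (B:ℝ)^k * (1 - (1 - 1/(B:ℝ))^(k-1)) := by
  have hle : B*(B-1)^(k-1) ≤ B^k := by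
    have h1 : B*(B-1)^(k-1) ≤ B*B^(k-1) :=
      Nat.mul_le_mul_left _ (Nat.pow_le_pow_left (by omega) _)
    have h2 : B*B^(k-1) = B^(k-1+1) := (pow_succ' B (k-1)).symm
    have h3 : k - 1 + 1 = k := by omega
    rw [h2, h3] at h1
    exact h1
  have hB0 : (0:ℝ) < B := by
    have : (0:ℕ) < B := hB
    exact_mod_cast this
  rw [Nat.cast_sub hle]
  push_cast [Nat.cast_sub hB]
  have hfact : (B:ℝ)*(1 - 1/(B:ℝ)) = (B:ℝ)-1 := by field_simp
  have hpow : (B:ℝ)^k * (1 - 1/(B:ℝ))^(k-1) = (B:ℝ)*((B:ℝ)-1)^(k-1) := by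
    have hk1 : k = (k-1)+1 := by omega
    calc (B:ℝ)^k * (1-1/(B:ℝ))^(k-1) = (B:ℝ)^((k-1)+1) * (1-1/(B:ℝ))^(k-1) := by rw [← hk1]
    _ = (B:ℝ) * ((B:ℝ)^(k-1) * (1-1/(B:ℝ))^(k-1)) := by ring
    _ = (B:ℝ) * ((B:ℝ)*(1-1/(B:ℝ)))^(k-1) := by rw [mul_pow]
    _ = (B:ℝ)*((B:ℝ)-1)^(k-1) := by rw [hfact]
  rw [mul_sub, mul_one, hpow]

theorem stmt_9 (k n d q : ℕ) (hk : 2 ≤ k) (hkn : k ≤ n) (hd : 0 < d) (hq : 2 ≤ q) :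
    ∃ t : ℕ, (∃ M : Fin t → Fin n → Bool, IsSuperimposedCode k n d t M) ∧
      (t : ℤ) ≤ ⌈(1 / ((-(Real.logb 2 (1 - (1 - 1 / (q : ℝ)) ^ (k - 1)))) / ((q : ℝ) + (d : ℝ)))) *
          ((k : ℝ) * Real.logb 2 ((n : ℝ) / (k : ℝ)) +
            Real.logb 2 ((k : ℝ) * Real.exp k))⌉ := by
  obtain ⟨a, r, hr1, hrq, hlen, hnum⟩ := master k n d q hk hkn hd hq
  have hA : ∀ i : Fin (a+1), 1 ≤ (fun i : Fin (a+1) => if (i:ℕ) < a then q else r) i := by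
    intro i; dsimp only; split <;> omega
  have hcount : n.choose k * k *
      ∏ i : Fin (a+1), ((fun i : Fin (a+1) => if (i:ℕ) < a then q else r) i ^ k -
        (fun i : Fin (a+1) => if (i:ℕ) < a then q else r) i *
        ((fun i : Fin (a+1) => if (i:ℕ) < a then q else r) i - 1) ^ (k-1)) <
      ∏ i : Fin (a+1), (fun i : Fin (a+1) => if (i:ℕ) < a then q else r) i ^ k := by
    have hprod1 : ∏ i : Fin (a+1), ((fun i : Fin (a+1) => if (i:ℕ) < a then q else r) i ^ k -
        (fun i : Fin (a+1) => if (i:ℕ) < a then q else r) i *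
        ((fun i : Fin (a+1) => if (i:ℕ) < a then q else r) i - 1) ^ (k-1)) =
        (q^k - q*(q-1)^(k-1))^a * (r^k - r*(r-1)^(k-1)) := by
      rw [Fin.prod_univ_castSucc]
      congr 1
      · have he : ∀ i : Fin a, (fun i : Fin (a+1) => if (i:ℕ) < a then q else r) i.castSucc ^ k -
            (fun i : Fin (a+1) => if (i:ℕ) < a then q else r) i.castSucc *
            ((fun i : Fin (a+1) => if (i:ℕ) < a then q else r) i.castSucc - 1) ^ (k-1) =
            q^k - q*(q-1)^(k-1) := by
          intro i
          have : ((i.castSucc : Fin (a+1)) : ℕ) < a := by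
            simp [Fin.coe_castSucc, i.isLt]
          simp only [this, if_pos]
        rw [Finset.prod_congr rfl (fun i _ => he i), Finset.prod_const, Finset.card_univ,
          Fintype.card_fin]
      · have : ¬ ((Fin.last a : Fin (a+1)) : ℕ) < a := by simp
        simp only [this, if_neg, not_false_iff]
    have hprod2 : ∏ i : Fin (a+1), (fun i : Fin (a+1) => if (i:ℕ) < a then q else r) i ^ k =
        (q^k)^a * r^k := by
      rw [Fin.prod_univ_castSucc]
      congr 1
      · have he : ∀ i : Fin a, (fun i : Fin (a+1) => if (i:ℕ) < a then q else r) i.castSucc ^ k =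
            q^k := by
          intro i
          have : ((i.castSucc : Fin (a+1)) : ℕ) < a := by
            simp [Fin.coe_castSucc, i.isLt]
          simp only [this, if_pos]
        rw [Finset.prod_congr rfl (fun i _ => he i), Finset.prod_const, Finset.card_univ,
          Fintype.card_fin]
      · have : ¬ ((Fin.last a : Fin (a+1)) : ℕ) < a := by simp
        simp only [this, if_neg, not_false_iff]
    rw [hprod1, hprod2]
    have e1 : ((q^k - q*(q-1)^(k-1) : ℕ):ℝ) = (q:ℝ)^k * (1 - (1 - 1/(q:ℝ))^(k-1)) :=
      badrow_cast q k (by omega) hk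
    have e2 : ((r^k - r*(r-1)^(k-1) : ℕ):ℝ) = (r:ℝ)^k * (1 - (1 - 1/(r:ℝ))^(k-1)) :=
      badrow_cast r k hr1 hk
    have key : ((n.choose k * k * ((q^k - q*(q-1)^(k-1))^a * (r^k - r*(r-1)^(k-1))) : ℕ) : ℝ) <
        (((q^k)^a * r^k : ℕ) : ℝ) := by
      have hq0 : (0:ℝ) < q := by positivity
      have hr0 : (0:ℝ) < r := by
        have : (0:ℕ) < r := hr1
        exact_mod_cast this
      calc ((n.choose k * k * ((q^k - q*(q-1)^(k-1))^a * (r^k - r*(r-1)^(k-1))) : ℕ) : ℝ)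
          = (n.choose k : ℝ) * k * (((q^k - q*(q-1)^(k-1) : ℕ):ℝ)^a *
            ((r^k - r*(r-1)^(k-1) : ℕ):ℝ)) := by push_cast; ring
        _ = ((k:ℝ) * (n.choose k) * (1 - (1 - 1/(q:ℝ))^(k-1))^a * (1 - (1 - 1/(r:ℝ))^(k-1))) *
            (((q:ℝ)^k)^a * (r:ℝ)^k) := by rw [e1, e2, mul_pow]; ring
        _ < 1 * (((q:ℝ)^k)^a * (r:ℝ)^k) := by
            apply mul_lt_mul_of_pos_right hnum
            positivity
        _ = (((q^k)^a * r^k : ℕ) : ℝ) := by push_cast; ring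
    exact_mod_cast key
  obtain ⟨c, hc⟩ := exists_good_code n (a+1) k hkn
    (fun i : Fin (a+1) => if (i:ℕ) < a then q else r) hA hcount
  obtain ⟨M, hM⟩ := build_code k n d q a r hd hr1 hrq c hc
  exact ⟨a*(q+d)+r, ⟨M, hM⟩, by exact_mod_cast hlen⟩

end Proofs
end

section
/- Let M be a (k,n,d,p)-selector with t rows and let q be an integer with 1 ≤ q ≤ p−1. Let I be a set of q column indices of M and let f ∈ {0,1}^t be the bitwise OR of the columns of M indexed by I. Then the number of column indices j ∉ I such that the support of column j of M is contained in the support of f is at most k − q − 1. -/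
/-- `M` (a `t × n` binary matrix) is a `(k,n,d,p)`-selector: every column satisfies the
runlength constraint `d`, and for every set `S` of `k` columns, the submatrix they form
contains among its rows at least `p` distinct rows of the `k × k` identity matrix, i.e.
at least `p` columns `j ∈ S` admit a row where `j` has a 1 and all other columns of `S`
have a 0. -/
def IsSelector (k n d p t : ℕ) (M : Fin t → Fin n → Bool) : Prop :=
  (∀ j : Fin n, RunConstrained d (fun i => M i j)) ∧
  ∀ S : Finset (Fin n), S.card = k →
    p ≤ (S.filter (fun j =>
          ∃ i : Fin t, M i j = true ∧ ∀ j' ∈ S, j' ≠ j → M i j' = false)).card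

/-! If `k - q` columns outside `I` had their supports inside that of `f`, then together with `I`
they would form `k` columns in which none of them can be isolated by a row of the identity matrix:
every 1 of such a column meets a 1 of some column of `I`. So at most `q < p` of these `k` columns
are isolated, contradicting the selector property. -/

open Finset

section Isolated

variable {α β : Type*}

def IsIsolatedIn (M : α → β → Bool) (S : Finset β) (j : β) : Prop :=
  ∃ i, M i j = true ∧ ∀ j' ∈ S, j' ≠ j → M i j' = false

theorem not_isIsolatedIn_of_covered {M : α → β → Bool} {S : Finset β} {j : β}
    (hcov : ∀ i, M i j = true → ∃ j' ∈ S, j' ≠ j ∧ M i j' = true) : ¬ IsIsolatedIn M S j := by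
  rintro ⟨i, hij, hrow⟩
  obtain ⟨j', hj'S, hne, hij'⟩ := hcov i hij
  simp [hrow j' hj'S hne] at hij'

end Isolated

section Selector

variable {k n d p t : ℕ} {M : Fin t → Fin n → Bool}

theorem IsSelector.le_card_of_isIsolatedIn_subset (hM : IsSelector k n d p t M)
    {S T : Finset (Fin n)} (hS : S.card = k) (hT : ∀ j ∈ S, IsIsolatedIn M S j → j ∈ T) :
    p ≤ T.card :=
  (hM.2 S hS).trans <| card_le_card fun j hj => hT j (mem_filter.1 hj).1 (mem_filter.1 hj).2

theorem IsSelector.card_add_card_covered_lt (hM : IsSelector k n d p t M) (hpk : p ≤ k)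
    {I : Finset (Fin n)} (hIp : I.card < p) :
    I.card + (univ.filter fun j => j ∉ I ∧ ∀ i, M i j = true → ∃ j' ∈ I, M i j' = true).card
      < k := by
  set C := univ.filter fun j => j ∉ I ∧ ∀ i, M i j = true → ∃ j' ∈ I, M i j' = true
  by_contra! hk
  obtain ⟨B, hBC, hBcard⟩ := exists_subset_card_eq (show k - I.card ≤ C.card by omega)
  have hIB : Disjoint I B := disjoint_right.2 fun j hj => (mem_filter.1 (hBC hj)).2.1
  have hS : (I ∪ B).card = k := by rw [card_union_of_disjoint hIB]; omega
  refine hIp.not_ge (hM.le_card_of_isIsolatedIn_subset hS fun j hj hiso => ?_)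
  refine (mem_union.1 hj).resolve_right fun hjB => not_isIsolatedIn_of_covered ?_ hiso
  obtain ⟨-, hjI, hcov⟩ := mem_filter.1 (hBC hjB)
  intro i hij
  obtain ⟨j', hj'I, hij'⟩ := hcov i hij
  exact ⟨j', mem_union_left _ hj'I, ne_of_mem_of_not_mem hj'I hjI, hij'⟩

end Selector

theorem stmt_14_general (k n d p t q : ℕ) (hp : 1 ≤ p) (hpk : p ≤ k)
    (M : Fin t → Fin n → Bool) (hM : IsSelector k n d p t M)
    (I : Finset (Fin n)) (hqp : q ≤ p - 1) (hI : I.card = q)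
    (f : Fin t → Bool) (hf : ∀ i : Fin t, f i = true ↔ ∃ j ∈ I, M i j = true) :
    (Finset.univ.filter (fun j : Fin n =>
        j ∉ I ∧ ∀ i : Fin t, M i j = true → f i = true)).card ≤ k - q - 1 := by
  have hcovered := hM.card_add_card_covered_lt hpk (I := I) (by omega)
  simp only [← hf] at hcovered
  omega

theorem stmt_14 (k n d p t q : ℕ) (hp : 1 ≤ p) (hpk : p ≤ k) (hkn : k ≤ n)
    (M : Fin t → Fin n → Bool) (hM : IsSelector k n d p t M)
    (I : Finset (Fin n)) (hq1 : 1 ≤ q) (hqp : q ≤ p - 1) (hI : I.card = q)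
    (f : Fin t → Bool) (hf : ∀ i : Fin t, f i = true ↔ ∃ j ∈ I, M i j = true) :
    (Finset.univ.filter (fun j : Fin n =>
        j ∉ I ∧ ∀ i : Fin t, M i j = true → f i = true)).card ≤ k - q - 1 :=
  stmt_14_general k n d p t q hp hpk M hM I hqp hI f hf
end

section
/- Let M be a (2k, n, d, k+1)-selector with t rows and let P be a set of column indices of M with 1 ≤ |P| ≤ k. Let f ∈ {0,1}^t be the bitwise OR of the columns of M indexed by P, and let S be the set of all column indices j such that the support of column j is contained in the support of f. Then P ⊆ S and |S| ≤ 2k. -/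
theorem stmt_15 (k n d t : ℕ) (hk : 1 ≤ k) (hn : 2 * k ≤ n)
    (M : Fin t → Fin n → Bool) (hM : IsSelector (2 * k) n d (k + 1) t M)
    (P : Finset (Fin n)) (hP1 : 1 ≤ P.card) (hPk : P.card ≤ k)
    (f : Fin t → Bool) (hf : ∀ i : Fin t, f i = true ↔ ∃ j ∈ P, M i j = true)
    (S : Finset (Fin n))
    (hS : ∀ j : Fin n, j ∈ S ↔ ∀ i : Fin t, M i j = true → f i = true) :
    P ⊆ S ∧ S.card ≤ 2 * k := by
  have hPS : P ⊆ S := by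
    intro j hj
    rw [hS]
    intro i hi
    exact (hf i).mpr ⟨j, hj, hi⟩
  refine ⟨hPS, ?_⟩
  by_contra hbig
  push_neg at hbig
  obtain ⟨T, hPT, hTS, hTcard⟩ := Finset.exists_subsuperset_card_eq hPS
    (hPk.trans (by omega)) (le_of_lt hbig)
  have hsel := hM.2 T hTcard
  set F := T.filter (fun j =>
      ∃ i : Fin t, M i j = true ∧ ∀ j' ∈ T, j' ≠ j → M i j' = false) with hF
  have : ∃ j ∈ F, j ∉ P := by
    by_contra h
    push_neg at h
    have : F ⊆ P := h
    have := Finset.card_le_card this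
    omega
  obtain ⟨j, hjF, hjP⟩ := this
  obtain ⟨hjT, i, hij, hall⟩ := Finset.mem_filter.mp hjF
  have hfS : f i = true := (hS j).mp (hTS hjT) i hij
  obtain ⟨j', hj'P, hj'⟩ := (hf i).mp hfS
  have : M i j' = false := hall j' (hPT hj'P) (fun h => hjP (h ▸ hj'P))
  simp [this] at hj'
end

section
/- There exists a constant c₀ ≥ 0 such that for all positive integers n, k, d with 2 ≤ k and 2e·k ≤ n, there exists a (2k, n, d, k+1)-selector of length t with t + 2k ≤ 2d·ln(n/k) + c₀ · k · ln(n/k). (Consequently, a two-stage group testing algorithm with runlength constraint d identifying up to k positives among n items exists using at most 2d·ln(n/k) + O(k·ln(n/k)) tests.) -/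
/-!
The matrix is read off a code `c : Fin w → Fin n → Fin B`: block `b` consists of `B` rows
followed by `d` zero rows, and column `j` has its only 1 of the block in row `c b j`. The padding
gives the runlength constraint, and `j ∈ S` is selected as soon as, in some block, its symbol
differs from the symbols of all other members of `S`.

With `B = 2²¹k` and `w = ⌊2 ln(n/k)⌋` a code good for every `2k`-set `S` exists by counting. If
at least `k` members of `S` are unselected, then in every block at least `k` members of `S`
collide, so at least `⌈k/2⌉` of them repeat the symbol of an earlier member. Recording which ones,
and a pointer to an earlier member for each, determines their symbols; this saves a factor
`B^⌈k/2⌉ / (2^{2k} (2k)^⌈k/2⌉)` per block, and over `w` blocks it beats the union bound over the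
`C(n,2k) ≤ (n/k)^{4k}` sets `S`.
-/

open Finset Real

theorem Nat.choose_le_exp_mul_div_pow (n m : ℕ) : (n.choose m : ℝ) ≤ (exp 1 * n / m) ^ m := by
  rcases Nat.eq_zero_or_pos m with rfl | hm
  · simp
  have hm' : (m : ℝ) ^ m ≠ 0 := pow_ne_zero _ (Nat.cast_ne_zero.2 hm.ne')
  calc (n.choose m : ℝ) ≤ n ^ m / m.factorial := Nat.choose_le_pow_div m n
    _ = (n / m) ^ m * (m ^ m / m.factorial) := by
        rw [div_pow, ← mul_div_assoc, div_mul_cancel₀ _ hm']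
    _ ≤ (n / m) ^ m * exp m := by gcongr; exact pow_div_factorial_le_exp _ m.cast_nonneg m
    _ = (exp 1 * n / m) ^ m := by rw [← exp_one_pow, ← mul_pow, mul_div_assoc, mul_comm]

namespace SelectorCode

section Counting

variable {κ ι β : Type*} [LinearOrder ι] [DecidableEq β]

def collisions (y : ι → β) (S : Finset ι) : Finset ι :=
  S.filter fun j => ∃ j' ∈ S, j' ≠ j ∧ y j' = y j

def repeats (y : ι → β) (S : Finset ι) : Finset ι :=
  S.filter fun j => ∃ j' ∈ S, j' < j ∧ y j' = y j

def isolated [Fintype κ] (c : κ → ι → β) (S : Finset ι) : Finset ι :=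
  S.filter fun j => ∃ b, ∀ j' ∈ S, j' ≠ j → c b j' ≠ c b j

theorem card_collisions_le_two_mul_card_repeats (y : ι → β) (S : Finset ι) :
    #(collisions y S) ≤ 2 * #(repeats y S) := by
  -- a collision that repeats nothing is the first of its class; send it to a later member
  have hfirst : #(collisions y S \ repeats y S) ≤ #(repeats y S) := by
    refine card_le_card_of_forall_subsingleton (fun j j' => j < j' ∧ y j = y j') ?_ ?_
    · intro j hj
      simp only [collisions, repeats, mem_sdiff, mem_filter, not_and, not_exists] at hj
      obtain ⟨⟨hjS, j', hj'S, hne, heq⟩, hfst⟩ := hj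
      have hlt : j < j' := lt_of_le_of_ne (not_lt.1 fun h => hfst hjS j' hj'S h heq) hne.symm
      exact ⟨j', mem_filter.2 ⟨hj'S, j, hjS, hlt, heq.symm⟩, hlt, heq.symm⟩
    · intro j' _ j₁ hj₁ j₂ hj₂
      obtain ⟨hj₁, -, heq₁⟩ :
          j₁ ∈ collisions y S \ repeats y S ∧ j₁ < j' ∧ y j₁ = y j' := hj₁
      obtain ⟨hj₂, -, heq₂⟩ :
          j₂ ∈ collisions y S \ repeats y S ∧ j₂ < j' ∧ y j₂ = y j' := hj₂
      simp only [mem_sdiff, collisions, repeats, mem_filter, not_and, not_exists] at hj₁ hj₂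
      by_contra hne
      rcases lt_or_gt_of_ne hne with h | h
      · exact hj₂.2 hj₂.1.1 j₁ hj₁.1.1 h (heq₁.trans heq₂.symm)
      · exact hj₁.2 hj₁.1.1 j₂ hj₂.1.1 h (heq₂.trans heq₁.symm)
  have := card_le_card_sdiff_add_card (s := collisions y S) (t := repeats y S)
  omega

theorem card_filter_forall_eq_earlier_le [Fintype ι] [Fintype β] (R : Finset ι)
    (prev : R → ι) :
    #(univ.filter fun y : ι → β => ∀ j : R, prev j < j ∧ y (prev j) = y j)
      ≤ Fintype.card β ^ (Fintype.card ι - #R) := by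
  -- such a `y` is recovered from its values off `R` by induction along the order
  have hinj : Set.InjOn (fun (y : ι → β) (j : {j // j ∉ R}) => y j)
      (univ.filter fun y : ι → β => ∀ j : R, prev j < j ∧ y (prev j) = y j) := by
    intro y hy z hz hyz
    simp only [coe_filter, mem_univ, true_and, Set.mem_ofPred_eq] at hy hz
    funext j
    induction j using WellFoundedLT.induction with
    | _ j ih =>
      by_cases hj : j ∈ R
      · obtain ⟨hlt, hy⟩ := hy ⟨j, hj⟩
        rw [← hy, ← (hz ⟨j, hj⟩).2, ih _ hlt]
      · exact congrFun hyz ⟨j, hj⟩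
  calc _ ≤ #(univ : Finset ({j // j ∉ R} → β)) :=
        card_le_card_of_injOn _ (fun _ _ => mem_coe.2 (mem_univ _)) hinj
    _ = Fintype.card β ^ (Fintype.card ι - #R) := by
        rw [card_univ, Fintype.card_fun, Fintype.card_subtype_compl, Fintype.card_coe]

theorem card_filter_le_card_repeats_le [Fintype ι] [Fintype β] (S : Finset ι) (r : ℕ) :
    #(univ.filter fun y : ι → β => r ≤ #(repeats y S))
      ≤ (#S).choose r * #S ^ r * Fintype.card β ^ (Fintype.card ι - r) := by
  have hsub : (univ.filter fun y : ι → β => r ≤ #(repeats y S)) ⊆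
      (S.powersetCard r).biUnion fun R => (univ : Finset (R → S)).biUnion fun prev =>
        univ.filter fun y : ι → β => ∀ j : R, (prev j : ι) < j ∧ y (prev j) = y j := by
    intro y hy
    obtain ⟨R, hRrep, hRcard⟩ := exists_subset_card_eq (mem_filter.1 hy).2
    have hearlier : ∀ j : R, ∃ j' : S, (j' : ι) < j ∧ y j' = y j := by
      intro j
      obtain ⟨-, j', hj'S, hlt, heq⟩ := mem_filter.1 (hRrep j.2)
      exact ⟨⟨j', hj'S⟩, hlt, heq⟩
    choose prev hprev using hearlier
    simp only [mem_biUnion, mem_powersetCard, mem_filter, mem_univ, true_and]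
    exact ⟨R, ⟨hRrep.trans (filter_subset _ _), hRcard⟩, prev, hprev⟩
  calc _ ≤ _ := card_le_card hsub
    _ ≤ ∑ R ∈ S.powersetCard r, ∑ _prev : R → S,
          Fintype.card β ^ (Fintype.card ι - #R) :=
        card_biUnion_le.trans <| sum_le_sum fun R _ => card_biUnion_le.trans <|
          sum_le_sum fun prev _ => card_filter_forall_eq_earlier_le R fun j => prev j
    _ = _ := by
        rw [sum_const_nat fun R hR => by
          rw [sum_const, card_univ, Fintype.card_fun, Fintype.card_coe, Fintype.card_coe,
            (mem_powersetCard.1 hR).2, smul_eq_mul], card_powersetCard, mul_assoc]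

theorem isolated_subset [Fintype κ] (c : κ → ι → β) (S : Finset ι) : isolated c S ⊆ S :=
  filter_subset _ _

theorem sdiff_isolated_subset_collisions [Fintype κ] (c : κ → ι → β) (S : Finset ι)
    (b : κ) :
    S \ isolated c S ⊆ collisions (c b) S := by
  intro j hj
  simp only [isolated, mem_sdiff, mem_filter, not_and, not_exists, not_forall, not_not] at hj
  obtain ⟨j', hj'S, hne, heq⟩ := hj.2 hj.1 b
  exact mem_filter.2 ⟨hj.1, j', hj'S, hne, heq⟩

theorem card_filter_le_card_sdiff_isolated_le [Fintype ι] [Fintype β] [Fintype κ]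
    [DecidableEq κ] (S : Finset ι) {m r : ℕ} (hrm : 2 * r ≤ m + 1) :
    #(univ.filter fun c : κ → ι → β => m ≤ #(S \ isolated c S))
      ≤ ((#S).choose r * #S ^ r * Fintype.card β ^ (Fintype.card ι - r)) ^ Fintype.card κ := by
  -- every block must then contain at least `m` collisions, hence at least `r` repeats
  have hsub : (univ.filter fun c : κ → ι → β => m ≤ #(S \ isolated c S)) ⊆
      Fintype.piFinset fun _ => univ.filter fun y : ι → β => r ≤ #(repeats y S) := by
    intro c hc
    simp only [mem_filter, mem_univ, true_and, Fintype.mem_piFinset] at hc ⊢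
    intro b
    have := (hc.trans (card_le_card (sdiff_isolated_subset_collisions c S b))).trans
      (card_collisions_le_two_mul_card_repeats (c b) S)
    omega
  calc _ ≤ _ := card_le_card hsub
    _ ≤ _ := by
        rw [Fintype.card_piFinset, prod_const, card_univ]
        exact Nat.pow_le_pow_left (card_filter_le_card_repeats_le S r) _

theorem exists_forall_card_sdiff_isolated_lt [Fintype ι] [Fintype β] [Fintype κ]
    [DecidableEq κ] {s m r : ℕ} (hrm : 2 * r ≤ m + 1)
    (hcount : (Fintype.card ι).choose s *
        (s.choose r * s ^ r * Fintype.card β ^ (Fintype.card ι - r)) ^ Fintype.card κ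
      < (Fintype.card β ^ Fintype.card ι) ^ Fintype.card κ) :
    ∃ c : κ → ι → β, ∀ S : Finset ι, #S = s → #(S \ isolated c S) < m := by
  by_contra! hbad
  have hcover : (univ : Finset (κ → ι → β)) ⊆ (univ.powersetCard s).biUnion fun S =>
      univ.filter fun c : κ → ι → β => m ≤ #(S \ isolated c S) := by
    intro c _
    obtain ⟨S, hS, hm⟩ := hbad c
    exact mem_biUnion.2
      ⟨S, mem_powersetCard.2 ⟨subset_univ S, hS⟩, mem_filter.2 ⟨mem_univ c, hm⟩⟩
  refine hcount.not_ge ?_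
  calc (Fintype.card β ^ Fintype.card ι) ^ Fintype.card κ
        = #(univ : Finset (κ → ι → β)) := by
        rw [card_univ, Fintype.card_fun, Fintype.card_fun]
    _ ≤ ∑ S ∈ univ.powersetCard s,
          #(univ.filter fun c : κ → ι → β => m ≤ #(S \ isolated c S)) :=
        (card_le_card hcover).trans card_biUnion_le
    _ ≤ ∑ S ∈ univ.powersetCard s,
          (s.choose r * s ^ r * Fintype.card β ^ (Fintype.card ι - r)) ^ Fintype.card κ :=
        sum_le_sum fun S hS =>
          (mem_powersetCard.1 hS).2 ▸ card_filter_le_card_sdiff_isolated_le S hrm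
    _ = _ := by rw [sum_const, card_powersetCard, card_univ, smul_eq_mul]

end Counting

section Matrix

variable {w n B : ℕ}

def codeMatrix (d : ℕ) (c : Fin w → Fin n → Fin B) : Fin (w * (B + d)) → Fin n → Bool :=
  fun i j => decide (((finProdFinEquiv.symm i).2 : ℕ) = c (finProdFinEquiv.symm i).1 j)

theorem codeMatrix_apply (d : ℕ) (c : Fin w → Fin n → Fin B) (b : Fin w) (o : Fin (B + d))
    (j : Fin n) : codeMatrix d c (finProdFinEquiv (b, o)) j = decide ((o : ℕ) = c b j) := by
  simp only [codeMatrix, Equiv.symm_apply_apply]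

theorem runConstrained_codeMatrix (d : ℕ) (c : Fin w → Fin n → Fin B) (j : Fin n) :
    RunConstrained d fun i => codeMatrix d c i j := by
  intro i i' hlt hi hi'
  obtain ⟨⟨b, o⟩, rfl⟩ := finProdFinEquiv.surjective i
  obtain ⟨⟨b', o'⟩, rfl⟩ := finProdFinEquiv.surjective i'
  simp only [codeMatrix_apply, decide_eq_true_eq] at hi hi'
  rw [Fin.lt_def] at hlt
  simp only [finProdFinEquiv_apply_val] at hlt ⊢
  have ho : (o : ℕ) < B := hi ▸ (c b j).2
  have ho' : (o' : ℕ) < B + d := o'.2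
  -- a column has one 1 per block, placed before the `d` padding rows of the block
  have hbb' : (b : ℕ) + 1 ≤ b' := by
    by_contra! h
    rcases (Nat.lt_succ_iff.1 h).lt_or_eq with h | h
    · have := Nat.mul_le_mul_left (B + d) (Nat.succ_le_of_lt h)
      nlinarith
    · have hoo : (o : ℕ) = o' := by rw [hi, hi', Fin.ext h]
      rw [h, hoo] at hlt
      exact lt_irrefl _ hlt
  have := Nat.mul_le_mul_left (B + d) hbb'
  nlinarith

theorem isSelector_codeMatrix {s p : ℕ} (d : ℕ) (c : Fin w → Fin n → Fin B)
    (hc : ∀ S : Finset (Fin n), #S = s → p ≤ #(isolated c S)) :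
    IsSelector s n d p (w * (B + d)) (codeMatrix d c) := by
  refine ⟨runConstrained_codeMatrix d c, fun S hS => (hc S hS).trans (card_le_card ?_)⟩
  intro j hj
  simp only [isolated, mem_filter] at hj
  obtain ⟨hjS, b, hb⟩ := hj
  refine mem_filter.2
    ⟨hjS, finProdFinEquiv (b, Fin.castLE (Nat.le_add_right B d) (c b j)), ?_, ?_⟩
  · simp [codeMatrix_apply]
  · intro j' hj' hne
    simpa [codeMatrix_apply, Fin.val_eq_val, eq_comm] using hb j' hj' hne

end Matrix

theorem choose_two_mul_lt_pow {n k w : ℕ} (hk : 0 < k) (hkn : 2 * exp 1 * k ≤ n)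
    (hw : log (n / k) ≤ w) : n.choose (2 * k) < (2 ^ (8 * k)) ^ w := by
  have hk' : (0 : ℝ) < k := Nat.cast_pos.2 hk
  set a : ℝ := n / k with ha
  have hea : 2 * exp 1 ≤ a := by rw [ha, le_div_iff₀ hk']; exact hkn
  have hapos : 0 < a := lt_of_lt_of_le (by positivity) hea
  have haw : a ≤ exp 1 ^ w := by
    rw [exp_one_pow, ← exp_log hapos]; exact exp_le_exp.2 hw
  have hw0 : w ≠ 0 := by
    rintro rfl
    have := add_one_le_exp 1
    norm_num at haw; linarith
  have hchoose : (n.choose (2 * k) : ℝ) ≤ (a ^ 2) ^ (2 * k) := by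
    refine (Nat.choose_le_exp_mul_div_pow n (2 * k)).trans (pow_le_pow_left₀ (by positivity) ?_ _)
    rw [show exp 1 * n / ((2 * k : ℕ) : ℝ) = exp 1 / 2 * a by push_cast; rw [ha]; field_simp,
      sq]
    exact mul_le_mul_of_nonneg_right (by linarith) hapos.le
  have hlt : (a ^ 2) ^ (2 * k) < (((2 : ℝ) ^ (8 * k)) ^ w) := by
    have h4 : exp 1 ^ w < 4 ^ w :=
      pow_lt_pow_left₀ (exp_one_lt_d9.trans (by norm_num)) (exp_pos 1).le hw0
    calc (a ^ 2) ^ (2 * k) = a ^ (4 * k) := by rw [← pow_mul]; ring_nf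
      _ < (4 ^ w) ^ (4 * k) := pow_lt_pow_left₀ (haw.trans_lt h4) hapos.le (by omega)
      _ = ((2 : ℝ) ^ (8 * k)) ^ w := by
          rw [← pow_mul, ← pow_mul, show (4 : ℝ) = 2 ^ 2 by norm_num, ← pow_mul]; ring_nf
  exact_mod_cast hchoose.trans_lt hlt

theorem two_pow_mul_choose_mul_pow_le {k r : ℕ} (hkr : k ≤ 2 * r) :
    2 ^ (8 * k) * ((2 * k).choose r * (2 * k) ^ r) ≤ (2 ^ 21 * k) ^ r := by
  calc 2 ^ (8 * k) * ((2 * k).choose r * (2 * k) ^ r)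
      ≤ 2 ^ (8 * k) * (2 ^ (2 * k) * (2 * k) ^ r) := by gcongr; exact Nat.choose_le_two_pow _ _
    _ = 2 ^ (10 * k + r) * k ^ r := by rw [mul_pow]; ring
    _ ≤ 2 ^ (21 * r) * k ^ r := by gcongr <;> omega
    _ = (2 ^ 21 * k) ^ r := by rw [mul_pow, pow_mul]

theorem mul_pow_lt_of_lt_pow {N P X B r n w : ℕ} (hN : N < P ^ w) (hPX : P * X ≤ B ^ r)
    (hrn : r ≤ n) (hX : 0 < X * B ^ (n - r)) : N * (X * B ^ (n - r)) ^ w < (B ^ n) ^ w :=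
  calc N * (X * B ^ (n - r)) ^ w < P ^ w * (X * B ^ (n - r)) ^ w :=
        Nat.mul_lt_mul_of_pos_right hN (pow_pos hX w)
    _ = (P * X * B ^ (n - r)) ^ w := by rw [← mul_pow, mul_assoc]
    _ ≤ (B ^ r * B ^ (n - r)) ^ w := by gcongr
    _ = (B ^ n) ^ w := by rw [← pow_add, Nat.add_sub_cancel' hrn]

end SelectorCode

open SelectorCode

theorem stmt_16 :
    ∃ c₀ : ℝ, 0 ≤ c₀ ∧ ∀ n k d : ℕ, 0 < n → 0 < d → 2 ≤ k →
      2 * Real.exp 1 * (k : ℝ) ≤ (n : ℝ) →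
      ∃ t : ℕ, (∃ M : Fin t → Fin n → Bool, IsSelector (2 * k) n d (k + 1) t M) ∧
        (t : ℝ) + 2 * (k : ℝ) ≤ 2 * (d : ℝ) * Real.log ((n : ℝ) / (k : ℝ)) +
          c₀ * (k : ℝ) * Real.log ((n : ℝ) / (k : ℝ)) := by
  refine ⟨2 ^ 22 + 2, by positivity, fun n k d _ _ hk hkn => ?_⟩
  have hk' : (0 : ℝ) < k := by positivity
  set L := Real.log (n / k)
  have hL : 1 ≤ L := by
    rw [Real.le_log_iff_exp_le (by positivity), le_div_iff₀ hk']
    nlinarith [Real.exp_pos 1]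
  set w := ⌊2 * L⌋₊
  have hwL : (w : ℝ) ≤ 2 * L := Nat.floor_le (by linarith)
  have hLw : L ≤ w := by linarith [Nat.lt_floor_add_one (2 * L)]
  have hkn' : k ≤ n := by
    exact_mod_cast (show (k : ℝ) ≤ n by nlinarith [Real.add_one_le_exp 1])
  have hcount := mul_pow_lt_of_lt_pow (n := n) (choose_two_mul_lt_pow (by omega) hkn hLw)
    (two_pow_mul_choose_mul_pow_le (r := (k + 1) / 2) (by omega)) (by omega)
    (Nat.mul_pos (Nat.mul_pos (Nat.choose_pos (by omega)) (by positivity)) (by positivity))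
  obtain ⟨c, hc⟩ := exists_forall_card_sdiff_isolated_lt (κ := Fin w) (ι := Fin n)
    (β := Fin (2 ^ 21 * k)) (s := 2 * k) (m := k) (r := (k + 1) / 2) (by omega)
    (by simpa only [Fintype.card_fin])
  refine ⟨w * (2 ^ 21 * k + d),
    ⟨codeMatrix d c, isSelector_codeMatrix d c fun S hS => ?_⟩, ?_⟩
  · have hsplit := card_sdiff_of_subset (isolated_subset c S)
    have hfew := hc S hS
    omega
  · push_cast
    nlinarith
end
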